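/- arXiv:math/0307058 — 9 statements merged into one kernel-verified Lean document; each statement's English description precedes it below -/
import Mathlib

section
/- Let α be a complex number with Re(α) < 1, n a nonnegative integer, and R_n(t) = n!·(2t-2α+n)·[(t-1)···(t-n)·(t-2α+n+1)···(t-2α+2n)] / [((t-α)(t-α+1)···(t-α+n))³]. Then R_n satisfies the symmetry R_n(-(t-2α+n)) = (-1)^n R_n(t) for all t where both sides are defined. -/
open Finset in
/-- The rational function
`R_n(t) = n!·(2t-2α+n)·∏_{j=1}^n (t-j)·∏_{j=n+1}^{2n} (t-2α+j) / (∏_{k=0}^n (t-α+k))³`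
satisfies `R_n(-(t-2α+n)) = (-1)^n R_n(t)` wherever both sides are defined. -/
theorem stmt3 (α : ℂ) (hα : α.re < 1) (n : ℕ)
    (R : ℂ → ℂ)
    (hR : ∀ t : ℂ, R t = (Nat.factorial n : ℂ) * (2 * t - 2 * α + n) *
      ((∏ j ∈ Icc 1 n, (t - (j : ℂ))) * ∏ j ∈ Icc (n + 1) (2 * n), (t - 2 * α + (j : ℂ))) /
      (∏ k ∈ range (n + 1), (t - α + (k : ℂ))) ^ 3)
    (t : ℂ)
    (ht : (∏ k ∈ range (n + 1), (t - α + (k : ℂ))) ≠ 0)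
    (ht' : (∏ k ∈ range (n + 1), (-(t - 2 * α + n) - α + (k : ℂ))) ≠ 0) :
    R (-(t - 2 * α + n)) = (-1) ^ n * R t := by
  have hmap : Icc (n + 1) (2 * n) = (Icc 1 n).map (addRightEmbedding n) := by
    rw [Finset.map_add_right_Icc]
    congr 1 <;> omega
  have e1 : (∏ j ∈ Icc 1 n, (-(t - 2 * α + n) - (j : ℂ)))
      = (-1) ^ n * ∏ j ∈ Icc (n + 1) (2 * n), (t - 2 * α + (j : ℂ)) := by
    rw [hmap, Finset.prod_map]
    calc (∏ j ∈ Icc 1 n, (-(t - 2 * α + n) - (j : ℂ)))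
        = ∏ j ∈ Icc 1 n, (-1) * (t - 2 * α + ((addRightEmbedding n j : ℕ) : ℂ)) := by
          refine Finset.prod_congr rfl fun j hj => ?_
          simp only [addRightEmbedding_apply]
          push_cast; ring
      _ = (-1) ^ n * ∏ j ∈ Icc 1 n, (t - 2 * α + ((addRightEmbedding n j : ℕ) : ℂ)) := by
          rw [Finset.prod_mul_distrib, Finset.prod_const, Nat.card_Icc]
          norm_num
  have e2 : (∏ j ∈ Icc (n + 1) (2 * n), (-(t - 2 * α + n) - 2 * α + (j : ℂ)))
      = (-1) ^ n * ∏ j ∈ Icc 1 n, (t - (j : ℂ)) := by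
    rw [hmap, Finset.prod_map]
    calc (∏ j ∈ Icc 1 n, (-(t - 2 * α + n) - 2 * α + ((addRightEmbedding n j : ℕ) : ℂ)))
        = ∏ j ∈ Icc 1 n, (-1) * (t - (j : ℂ)) := by
          refine Finset.prod_congr rfl fun j hj => ?_
          simp only [addRightEmbedding_apply]
          push_cast; ring
      _ = (-1) ^ n * ∏ j ∈ Icc 1 n, (t - (j : ℂ)) := by
          rw [Finset.prod_mul_distrib, Finset.prod_const, Nat.card_Icc]
          norm_num
  have e3 : (∏ k ∈ range (n + 1), (-(t - 2 * α + n) - α + (k : ℂ)))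
      = -((-1) ^ n * ∏ k ∈ range (n + 1), (t - α + (k : ℂ))) := by
    have hrefl := Finset.prod_range_reflect (fun j => (t - α + (j : ℂ))) (n + 1)
    calc (∏ k ∈ range (n + 1), (-(t - 2 * α + n) - α + (k : ℂ)))
        = ∏ k ∈ range (n + 1), (-1) * (t - α + ((n + 1 - 1 - k : ℕ) : ℂ)) := by
          refine Finset.prod_congr rfl fun k hk => ?_
          rw [Finset.mem_range] at hk
          have hk' : n + 1 - 1 - k = n - k := by omega
          rw [hk']
          have : ((n - k : ℕ) : ℂ) = (n : ℂ) - (k : ℂ) := by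
            push_cast [Nat.cast_sub (by omega : k ≤ n)]; ring
          rw [this]; ring
      _ = (-1) ^ (n + 1) * ∏ k ∈ range (n + 1), (t - α + ((n + 1 - 1 - k : ℕ) : ℂ)) := by
          rw [Finset.prod_mul_distrib, Finset.prod_const, Finset.card_range]
      _ = -((-1) ^ n * ∏ k ∈ range (n + 1), (t - α + (k : ℂ))) := by
          rw [hrefl]; ring
  rw [hR, hR, e1, e2, e3, ← mul_div_assoc]
  rw [div_eq_div_iff (pow_ne_zero 3 (e3 ▸ ht')) (pow_ne_zero 3 ht)]
  rcases Nat.even_or_odd n with h | h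
  · simp only [h.neg_one_pow, one_mul]
    ring
  · simp only [h.neg_one_pow, neg_one_mul, neg_neg]
    ring
end

section
/- Let α be a complex number with Re(α) < 1, n a nonnegative integer, and R_n(t) = n!²·(2t-2α+n)·[∏_{j=1}^n (t-j)·∏_{j=n+1}^{2n}(t-2α+j)] / [(∏_{k=0}^n (t-α+k))⁴]. Then R_n(-(t-2α+n)) = -R_n(t) for all t where both sides are defined. -/
open Finset in
/-- The rational function
`R_n(t) = n!²·(2t-2α+n)·∏_{j=1}^n (t-j)·∏_{j=n+1}^{2n} (t-2α+j) / (∏_{k=0}^n (t-α+k))⁴`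
satisfies `R_n(-(t-2α+n)) = -R_n(t)` wherever both sides are defined. -/
theorem stmt4 (α : ℂ) (hα : α.re < 1) (n : ℕ)
    (R : ℂ → ℂ)
    (hR : ∀ t : ℂ, R t = ((Nat.factorial n : ℂ)) ^ 2 * (2 * t - 2 * α + n) *
      ((∏ j ∈ Icc 1 n, (t - (j : ℂ))) * ∏ j ∈ Icc (n + 1) (2 * n), (t - 2 * α + (j : ℂ))) /
      (∏ k ∈ range (n + 1), (t - α + (k : ℂ))) ^ 4)
    (t : ℂ)
    (ht : (∏ k ∈ range (n + 1), (t - α + (k : ℂ))) ≠ 0)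
    (ht' : (∏ k ∈ range (n + 1), (-(t - 2 * α + n) - α + (k : ℂ))) ≠ 0) :
    R (-(t - 2 * α + n)) = -R t := by
  have hprodneg : ∀ (s : Finset ℕ) (f : ℕ → ℂ),
      ∏ i ∈ s, -f i = (-1) ^ s.card * ∏ i ∈ s, f i := by
    intro s f
    rw [← prod_const (-1 : ℂ), ← prod_mul_distrib]
    exact prod_congr rfl fun i _ => by ring
  have hmap : Icc (n + 1) (2 * n) = (Icc 1 n).map (addRightEmbedding n) := by
    rw [map_add_right_Icc]
    congr 1 <;> omega
  have hcard : (Icc 1 n).card = n := by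
    rw [Nat.card_Icc]; omega
  have hA : (∏ j ∈ Icc 1 n, (-(t - 2 * α + n) - (j : ℂ)))
      = (-1) ^ n * ∏ j ∈ Icc (n + 1) (2 * n), (t - 2 * α + (j : ℂ)) := by
    rw [hmap, prod_map]
    have : ∀ j ∈ Icc 1 n, (-(t - 2 * α + n) - (j : ℂ))
        = -(t - 2 * α + ((addRightEmbedding n) j : ℂ)) := by
      intro j hj
      simp only [addRightEmbedding_apply]
      push_cast
      ring
    rw [prod_congr rfl this, hprodneg, hcard]
  have hB : (∏ j ∈ Icc (n + 1) (2 * n), (-(t - 2 * α + n) - 2 * α + (j : ℂ)))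
      = (-1) ^ n * ∏ j ∈ Icc 1 n, (t - (j : ℂ)) := by
    rw [hmap, prod_map]
    have : ∀ j ∈ Icc 1 n, (-(t - 2 * α + n) - 2 * α + ((addRightEmbedding n) j : ℂ))
        = -(t - (j : ℂ)) := by
      intro j hj
      simp only [addRightEmbedding_apply]
      push_cast
      ring
    rw [prod_congr rfl this, hprodneg, hcard]
  have hD : (∏ k ∈ range (n + 1), (-(t - 2 * α + n) - α + (k : ℂ)))
      = (-1) ^ (n + 1) * ∏ k ∈ range (n + 1), (t - α + (k : ℂ)) := by
    have : ∀ k ∈ range (n + 1), (-(t - 2 * α + n) - α + (k : ℂ))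
        = -(t - α + ((n + 1 - 1 - k : ℕ) : ℂ)) := by
      intro k hk
      rw [mem_range] at hk
      have hkn : k ≤ n := Nat.lt_succ_iff.mp hk
      have : n + 1 - 1 - k = n - k := by omega
      rw [this, Nat.cast_sub hkn]
      push_cast
      ring
    rw [prod_congr rfl this, hprodneg, card_range,
      prod_range_reflect (fun k => t - α + (k : ℂ)) (n + 1)]
  rw [hR, hR, hA, hB, hD, mul_pow]
  have h4 : (((-1 : ℂ)) ^ (n + 1)) ^ 4 = 1 := by
    rw [← pow_mul]
    exact Even.neg_one_pow ⟨2 * (n + 1), by ring⟩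
  rw [h4, one_mul, ← neg_div]
  congr 1
  have hc : ((-1 : ℂ)) ^ n * ((-1 : ℂ)) ^ n = 1 := by
    rw [← pow_add]
    exact Even.neg_one_pow ⟨n, rfl⟩
  set P1 := ∏ j ∈ Icc 1 n, (t - (j : ℂ)) with hP1
  set P2 := ∏ j ∈ Icc (n + 1) (2 * n), (t - 2 * α + (j : ℂ)) with hP2
  linear_combination (-((Nat.factorial n : ℂ)) ^ 2 * (2 * t - 2 * α + (n : ℂ)) * P1 * P2) * hc
end

section
/- For real α < 1 and every nonnegative integer n, the double integral ∬_{[0,1]²} x^{n-α}(1-x)^n y^{n-α}(1-y)^n / (1-x(1-y))^{n+1} dx dy converges and tends to 0 as n → ∞. -/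
open MeasureTheory Filter Set Real

/-- Beta-type integrand is integrable on `(0, 1/2]`. -/
lemma aux_left {a : ℝ} (b : ℝ) (ha : -1 < a) :
    IntegrableOn (fun x : ℝ => x ^ a * (1 - x) ^ b) (Set.Ioc 0 (1/2)) volume := by
  have hg : IntegrableOn (fun x : ℝ => x ^ a) (Set.Ioc 0 (1/2)) volume := by
    have := intervalIntegral.intervalIntegrable_rpow' (a := 0) (b := 1/2) ha
    rwa [intervalIntegrable_iff_integrableOn_Ioc_of_le (by norm_num)] at this
  refine ((hg.const_mul ((1/2 : ℝ) ^ b + 1)).mono' ?_ ?_)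
  · apply Measurable.aestronglyMeasurable
    fun_prop
  · filter_upwards [ae_restrict_mem measurableSet_Ioc] with x hx
    have hx0 : 0 < x := hx.1
    have hx2 : x ≤ 1/2 := hx.2
    have h1x : (1/2 : ℝ) ≤ 1 - x := by linarith
    have h1x0 : (0:ℝ) < 1 - x := by linarith
    have hb : (1 - x) ^ b ≤ (1/2 : ℝ) ^ b + 1 := by
      rcases le_or_gt 0 b with hb0 | hb0
      · have : (1 - x) ^ b ≤ 1 := Real.rpow_le_one h1x0.le (by linarith) hb0
        have : (0:ℝ) ≤ (1/2 : ℝ) ^ b := Real.rpow_nonneg (by norm_num) b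
        linarith [Real.rpow_le_one h1x0.le (by linarith : (1:ℝ) - x ≤ 1) hb0]
      · have : (1 - x) ^ b ≤ (1/2 : ℝ) ^ b :=
          Real.rpow_le_rpow_of_nonpos (by norm_num) h1x hb0.le
        linarith
    have hxa : 0 ≤ x ^ a := Real.rpow_nonneg hx0.le a
    have hxb : 0 ≤ (1 - x) ^ b := Real.rpow_nonneg h1x0.le b
    rw [Real.norm_eq_abs, abs_of_nonneg (mul_nonneg hxa hxb)]
    calc x ^ a * (1 - x) ^ b ≤ x ^ a * ((1/2 : ℝ) ^ b + 1) :=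
          mul_le_mul_of_nonneg_left hb hxa
      _ = ((1/2 : ℝ) ^ b + 1) * x ^ a := by ring

/-- Beta-type integrand is integrable on `(0,1)`. -/
lemma beta_integrable {a b : ℝ} (ha : -1 < a) (hb : -1 < b) :
    IntegrableOn (fun x : ℝ => x ^ a * (1 - x) ^ b) (Set.Ioo 0 1) volume := by
  have hL : IntervalIntegrable (fun x : ℝ => x ^ a * (1 - x) ^ b) volume 0 (1/2) := by
    rw [intervalIntegrable_iff_integrableOn_Ioc_of_le (by norm_num)]
    exact aux_left b ha
  have hR : IntervalIntegrable (fun x : ℝ => x ^ a * (1 - x) ^ b) volume (1/2) 1 := by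
    have h2 : IntervalIntegrable (fun x : ℝ => x ^ b * (1 - x) ^ a) volume 0 (1/2) := by
      rw [intervalIntegrable_iff_integrableOn_Ioc_of_le (by norm_num)]
      exact aux_left a hb
    have h3 := h2.comp_sub_left 1
    have h4 : (fun x : ℝ => (1 - x) ^ b * (1 - (1 - x)) ^ a)
        = fun x : ℝ => x ^ a * (1 - x) ^ b := by
      funext x; rw [show (1 : ℝ) - (1 - x) = x by ring]; ring
    simp only [h4] at h3
    norm_num at h3
    exact h3.symm
  have := (hL.trans hR)
  rw [intervalIntegrable_iff_integrableOn_Ioc_of_le (by norm_num)] at this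
  exact this.mono_set Set.Ioo_subset_Ioc_self

open MeasureTheory Filter in
/-- For real `α < 1` the double integrals
`∬ x^{n-α}(1-x)^n y^{n-α}(1-y)^n/(1-x(1-y))^{n+1} dx dy` over the unit square
converge, and tend to `0` as `n → ∞`. -/
theorem stmt6 (α : ℝ) (hα : α < 1) :
    (∀ n : ℕ, IntegrableOn
      (fun p : ℝ × ℝ =>
        p.1 ^ ((n : ℝ) - α) * (1 - p.1) ^ n * p.2 ^ ((n : ℝ) - α) * (1 - p.2) ^ n /
          (1 - p.1 * (1 - p.2)) ^ (n + 1))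
      (Set.Ioo (0 : ℝ) 1 ×ˢ Set.Ioo (0 : ℝ) 1) volume) ∧
    Tendsto (fun n : ℕ =>
      ∫ p in Set.Ioo (0 : ℝ) 1 ×ˢ Set.Ioo (0 : ℝ) 1,
        p.1 ^ ((n : ℝ) - α) * (1 - p.1) ^ n * p.2 ^ ((n : ℝ) - α) * (1 - p.2) ^ n /
          (1 - p.1 * (1 - p.2)) ^ (n + 1))
      atTop (nhds 0) := by
  set s : ℝ := (max α 0 + 1) / 2 with hs_def
  have hs0 : 0 < s := by
    have : (0:ℝ) ≤ max α 0 := le_max_right _ _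
    simp only [hs_def]; linarith
  have hs1 : s < 1 := by
    have : max α 0 < 1 := max_lt hα one_pos
    simp only [hs_def]; linarith
  have hsα : α < s := by
    have h1 : α ≤ max α 0 := le_max_left _ _
    have h2 : max α 0 < 1 := max_lt hα one_pos
    simp only [hs_def]; linarith
  -- dominating function
  set g : ℝ × ℝ → ℝ := fun p => (p.1 ^ (-α) * (1 - p.1) ^ (-s)) * p.2 ^ (s - 1 - α)
    with hg_def
  have hg_int : IntegrableOn g (Set.Ioo (0:ℝ) 1 ×ˢ Set.Ioo (0:ℝ) 1) volume := by
    have h1 : IntegrableOn (fun x : ℝ => x ^ (-α) * (1 - x) ^ (-s)) (Set.Ioo 0 1) volume :=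
      beta_integrable (by linarith) (by linarith)
    have h2 : IntegrableOn (fun y : ℝ => y ^ (s - 1 - α)) (Set.Ioo 0 1) volume := by
      have := beta_integrable (a := s - 1 - α) (b := 0) (by linarith) (by norm_num)
      simpa [Real.rpow_zero] using this
    rw [IntegrableOn, Measure.volume_eq_prod, ← Measure.prod_restrict]
    exact h1.mul_prod h2
  -- pointwise facts
  have hfacts : ∀ x ∈ Set.Ioo (0:ℝ) 1, ∀ y ∈ Set.Ioo (0:ℝ) 1,
      (0 < 1 - x * (1 - y)) ∧
      (∀ n : ℕ, x ^ ((n : ℝ) - α) * (1 - x) ^ n * y ^ ((n : ℝ) - α) * (1 - y) ^ n /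
          (1 - x * (1 - y)) ^ (n + 1)
        = (x ^ (-α) * y ^ (-α) / (1 - x * (1 - y))) *
            (x * (1 - x) * y * (1 - y) / (1 - x * (1 - y))) ^ n) := by
    intro x hx y hy
    have hD : 0 < 1 - x * (1 - y) := by nlinarith [hx.1, hx.2, hy.1, hy.2]
    refine ⟨hD, fun n => ?_⟩
    have hxs : x ^ ((n : ℝ) - α) = x ^ (n : ℕ) * x ^ (-α) := by
      rw [show (n : ℝ) - α = (n : ℝ) + (-α) by ring, Real.rpow_add hx.1,
        Real.rpow_natCast]
    have hys : y ^ ((n : ℝ) - α) = y ^ (n : ℕ) * y ^ (-α) := by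
      rw [show (n : ℝ) - α = (n : ℝ) + (-α) by ring, Real.rpow_add hy.1,
        Real.rpow_natCast]
    rw [hxs, hys, div_pow, pow_succ, mul_pow, mul_pow, mul_pow]
    field_simp
  have hbound : ∀ x ∈ Set.Ioo (0:ℝ) 1, ∀ y ∈ Set.Ioo (0:ℝ) 1,
      (0 ≤ x * (1 - x) * y * (1 - y) / (1 - x * (1 - y))) ∧
      (x * (1 - x) * y * (1 - y) / (1 - x * (1 - y)) < 1) ∧
      (0 ≤ x ^ (-α) * y ^ (-α) / (1 - x * (1 - y))) ∧
      (x ^ (-α) * y ^ (-α) / (1 - x * (1 - y)) ≤ g (x, y)) := by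
    intro x hx y hy
    have hx0 := hx.1; have hx1 := hx.2; have hy0 := hy.1; have hy1 := hy.2
    have h1x0 : (0:ℝ) < 1 - x := by linarith
    have h1y0 : (0:ℝ) < 1 - y := by linarith
    have hD : 0 < 1 - x * (1 - y) := by nlinarith
    have hxa : 0 ≤ x ^ (-α) := Real.rpow_nonneg hx0.le _
    have hya : 0 ≤ y ^ (-α) := Real.rpow_nonneg hy0.le _
    refine ⟨by positivity, ?_, by positivity, ?_⟩
    · rw [div_lt_one hD]
      have h5 : x * (1 - x) * y * (1 - y) < x * y := by
        nlinarith [mul_pos (mul_pos hx0 hy0) (show (0:ℝ) < x + y - x*y by nlinarith)]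
      nlinarith
    · have hDx : 1 - x ≤ 1 - x * (1 - y) := by nlinarith
      have hDy : y ≤ 1 - x * (1 - y) := by nlinarith
      have h1 : (1 - x) ^ s ≤ (1 - x * (1 - y)) ^ s :=
        Real.rpow_le_rpow h1x0.le hDx hs0.le
      have h2 : y ^ (1 - s) ≤ (1 - x * (1 - y)) ^ (1 - s) :=
        Real.rpow_le_rpow hy0.le hDy (by linarith)
      have hDge : (1 - x) ^ s * y ^ (1 - s) ≤ 1 - x * (1 - y) := by
        calc (1 - x) ^ s * y ^ (1 - s)
            ≤ (1 - x * (1 - y)) ^ s * (1 - x * (1 - y)) ^ (1 - s) :=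
              mul_le_mul h1 h2 (Real.rpow_nonneg hy0.le _) (Real.rpow_nonneg hD.le _)
          _ = 1 - x * (1 - y) := by
              rw [← Real.rpow_add hD, show s + (1 - s) = 1 by ring, Real.rpow_one]
      have hden : 0 < (1 - x) ^ s * y ^ (1 - s) := by
        exact mul_pos (Real.rpow_pos_of_pos h1x0 _) (Real.rpow_pos_of_pos hy0 _)
      have hle : x ^ (-α) * y ^ (-α) / (1 - x * (1 - y))
          ≤ x ^ (-α) * y ^ (-α) / ((1 - x) ^ s * y ^ (1 - s)) :=
        div_le_div_of_nonneg_left (mul_nonneg hxa hya) hden hDge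
      refine hle.trans (le_of_eq ?_)
      have hgy : y ^ (s - 1 - α) = y ^ (-α) / y ^ (1 - s) := by
        rw [← Real.rpow_sub hy0, show -α - (1 - s) = s - 1 - α by ring]
      have hgx : (1 - x) ^ (-s) = ((1 - x) ^ s)⁻¹ := by
        rw [Real.rpow_neg h1x0.le]
      simp only [hg_def, hgy, hgx]
      have h3 : ((1 - x) ^ s) ≠ 0 := (Real.rpow_pos_of_pos h1x0 _).ne'
      have h4 : (y ^ (1 - s)) ≠ 0 := (Real.rpow_pos_of_pos hy0 _).ne'
      field_simp
      try ring
  have hmeasset : MeasurableSet (Set.Ioo (0:ℝ) 1 ×ˢ Set.Ioo (0:ℝ) 1) :=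
    measurableSet_Ioo.prod measurableSet_Ioo
  have hmeas : ∀ n : ℕ, AEStronglyMeasurable
      (fun p : ℝ × ℝ =>
        p.1 ^ ((n : ℝ) - α) * (1 - p.1) ^ n * p.2 ^ ((n : ℝ) - α) * (1 - p.2) ^ n /
          (1 - p.1 * (1 - p.2)) ^ (n + 1))
      (volume.restrict (Set.Ioo (0:ℝ) 1 ×ˢ Set.Ioo (0:ℝ) 1)) := by
    intro n
    apply Measurable.aestronglyMeasurable
    fun_prop
  have habs : ∀ n : ℕ, ∀ᵐ p ∂(volume.restrict (Set.Ioo (0:ℝ) 1 ×ˢ Set.Ioo (0:ℝ) 1)),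
      ‖p.1 ^ ((n : ℝ) - α) * (1 - p.1) ^ n * p.2 ^ ((n : ℝ) - α) * (1 - p.2) ^ n /
          (1 - p.1 * (1 - p.2)) ^ (n + 1)‖ ≤ g p := by
    intro n
    filter_upwards [ae_restrict_mem hmeasset] with p hp
    obtain ⟨hp1, hp2⟩ := hp
    obtain ⟨hr0, hr1, hc0, hcg⟩ := hbound p.1 hp1 p.2 hp2
    rw [(hfacts p.1 hp1 p.2 hp2).2 n, Real.norm_eq_abs,
      abs_of_nonneg (mul_nonneg hc0 (pow_nonneg hr0 n))]
    calc _ ≤ (p.1 ^ (-α) * p.2 ^ (-α) / (1 - p.1 * (1 - p.2))) * 1 :=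
          mul_le_mul_of_nonneg_left (pow_le_one₀ hr0 hr1.le) hc0
      _ = _ := mul_one _
      _ ≤ g p := hcg
  refine ⟨?_, ?_⟩
  · intro n
    exact hg_int.mono' (hmeas n) (habs n)
  · have := MeasureTheory.tendsto_integral_of_dominated_convergence
      (μ := volume.restrict (Set.Ioo (0:ℝ) 1 ×ˢ Set.Ioo (0:ℝ) 1))
      (F := fun (n : ℕ) (p : ℝ × ℝ) =>
        p.1 ^ ((n : ℝ) - α) * (1 - p.1) ^ n * p.2 ^ ((n : ℝ) - α) * (1 - p.2) ^ n /
          (1 - p.1 * (1 - p.2)) ^ (n + 1))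
      (f := fun _ => (0:ℝ)) g hmeas hg_int habs ?_
    · simpa using this
    · filter_upwards [ae_restrict_mem hmeasset] with p hp
      obtain ⟨hp1, hp2⟩ := hp
      obtain ⟨hr0, hr1, hc0, hcg⟩ := hbound p.1 hp1 p.2 hp2
      have heq : (fun n : ℕ =>
          p.1 ^ ((n : ℝ) - α) * (1 - p.1) ^ n * p.2 ^ ((n : ℝ) - α) * (1 - p.2) ^ n /
            (1 - p.1 * (1 - p.2)) ^ (n + 1))
          = fun n : ℕ => (p.1 ^ (-α) * p.2 ^ (-α) / (1 - p.1 * (1 - p.2))) *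
              (p.1 * (1 - p.1) * p.2 * (1 - p.2) / (1 - p.1 * (1 - p.2))) ^ n :=
        funext fun n => (hfacts p.1 hp1 p.2 hp2).2 n
      rw [heq]
      have := (tendsto_pow_atTop_nhds_zero_of_lt_one hr0 hr1).const_mul
        (p.1 ^ (-α) * p.2 ^ (-α) / (1 - p.1 * (1 - p.2)))
      simpa using this
end

section
/- For real α < 1 and n = 0, the double integral ∬_{[0,1]²} x^{-α} y^{-α} / (1-x(1-y)) dx dy equals 2·Z₂⁻(α) = 2·Σ_{ν≥1} (-1)^{ν-1}/(ν-α)². -/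
/-!
Write `r = -α`. For fixed `y`, the substitution `u = x y` turns the inner integral into
`∫_0^y u^r / ((1 + u) y - u) du`; exchanging the order of integration over the triangle
`0 < u < y < 1` and integrating in `y` leaves `∫_0^1 2 u^r (-log u) / (1 + u) du`. Expanding
`1 / (1 + u) = Σ (-u)^ν` and using `∫_0^1 u^s (-log u) du = 1 / (s + 1)^2` (substitute
`u = e^{-t}` and recognise `Γ(2)`) gives the alternating series; the interchange of sum and
integral is justified by the convergence of `Σ 1 / (ν + 1 + r)^2`. The integrands are
nonnegative, so the two-dimensional manipulations are done on lower Lebesgue integrals, where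
Tonelli needs no integrability.
-/

open MeasureTheory Set Real
open scoped ENNReal

theorem image_exp_neg_Ioi_zero : (fun t : ℝ => exp (-t)) '' Ioi 0 = Ioo 0 1 := by
  rw [show (fun t : ℝ => exp (-t)) = exp ∘ Neg.neg from rfl, image_comp, image_neg_Ioi,
    neg_zero, image_exp_Iio, exp_zero]

theorem integral_rpow_mul_neg_log {r : ℝ} (hr : -1 < r) :
    ∫ u in Ioo (0 : ℝ) 1, u ^ r * -log u = 1 / (r + 1) ^ 2 := by
  have hderiv : ∀ t ∈ Ioi (0 : ℝ),
      HasDerivWithinAt (fun t => exp (-t)) (-exp (-t)) (Ioi 0) t := fun t _ => by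
    simpa using (hasDerivAt_neg t).exp.hasDerivWithinAt
  rw [← image_exp_neg_Ioi_zero, integral_image_eq_integral_abs_deriv_smul measurableSet_Ioi
    hderiv (exp_injective.comp neg_injective).injOn]
  have hGamma := integral_rpow_mul_exp_neg_mul_Ioi two_pos (by linarith : 0 < r + 1)
  rw [Gamma_two, mul_one, rpow_two, one_div_pow] at hGamma
  rw [← hGamma]
  refine setIntegral_congr_fun measurableSet_Ioi fun t _ => ?_
  rw [abs_neg, abs_of_pos (exp_pos _), log_exp, ← exp_mul, smul_eq_mul,
    show -((r + 1) * t) = -t + -t * r by ring, exp_add, show (2 : ℝ) - 1 = 1 by norm_num,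
    rpow_one]
  ring

theorem integrableOn_rpow_mul_neg_log {r : ℝ} (hr : -1 < r) :
    IntegrableOn (fun u => u ^ r * -log u) (Ioo (0 : ℝ) 1) :=
  Integrable.of_integral_ne_zero <| by
    rw [integral_rpow_mul_neg_log hr]
    exact one_div_ne_zero (pow_ne_zero 2 (by linarith))

theorem integral_inv_mul_sub {u : ℝ} (hu0 : 0 < u) (hu1 : u < 1) :
    ∫ y in Ioo u 1, ((1 + u) * y - u)⁻¹ = 2 * -log u / (1 + u) := by
  rw [← integral_Ioc_eq_integral_Ioo, ← intervalIntegral.integral_of_le hu1.le,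
    intervalIntegral.integral_comp_mul_sub (fun x => x⁻¹) (by positivity : 1 + u ≠ 0),
    integral_inv_of_pos (by nlinarith) (by linarith)]
  rw [show (1 + u) * 1 - u = 1 by ring, show (1 + u) * u - u = u ^ 2 by ring, one_div,
    log_inv, log_pow, smul_eq_mul]
  ring

theorem lintegral_Ioo_rpow_mul_inv_mul_sub {r u : ℝ} (hu0 : 0 < u) (hu1 : u < 1) :
    ∫⁻ y in Ioo u 1, ENNReal.ofReal (u ^ r * ((1 + u) * y - u)⁻¹) =
      ENNReal.ofReal (2 * (u ^ r * -log u / (1 + u))) := by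
  have hpos : 0 < 2 * -log u / (1 + u) :=
    div_pos (by linarith [log_neg hu0 hu1]) (by linarith)
  have hint : IntegrableOn (fun y => ((1 + u) * y - u)⁻¹) (Ioo u 1) :=
    Integrable.of_integral_ne_zero (by rw [integral_inv_mul_sub hu0 hu1]; exact hpos.ne')
  rw [← ofReal_integral_eq_lintegral_ofReal (hint.const_mul _), integral_const_mul,
    integral_inv_mul_sub hu0 hu1]
  · ring_nf
  · filter_upwards [self_mem_ae_restrict measurableSet_Ioo] with y hy
    have : 0 < (1 + u) * y - u := by nlinarith [hy.1]
    exact mul_nonneg (rpow_nonneg hu0.le _) (inv_nonneg.2 this.le)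

theorem lintegral_Ioo_rpow_mul_rpow_div_one_sub_mul {r y : ℝ} (hy : 0 < y) :
    ∫⁻ x in Ioo (0 : ℝ) 1, ENNReal.ofReal (x ^ r * y ^ r / (1 - x * (1 - y))) =
      ∫⁻ u in Ioo 0 y, ENNReal.ofReal (u ^ r * ((1 + u) * y - u)⁻¹) := by
  have himage : (fun x => x * y) '' Ioo 0 1 = Ioo 0 y := by
    simpa using image_mul_right_Ioo (0 : ℝ) 1 hy
  rw [← himage, lintegral_image_eq_lintegral_abs_deriv_mul measurableSet_Ioo
    (fun x _ => (hasDerivAt_mul_const y).hasDerivWithinAt) (mul_left_injective₀ hy.ne').injOn]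
  refine setLIntegral_congr_fun measurableSet_Ioo fun x hx => ?_
  rw [abs_of_pos hy, ← ENNReal.ofReal_mul hy.le, mul_rpow hx.1.le hy.le,
    show (1 + x * y) * y - x * y = y * (1 - x * (1 - y)) by ring, mul_inv]
  congr 1
  field_simp

theorem lintegral_Ioo_lintegral_Ioo_swap {G : ℝ → ℝ → ℝ≥0∞}
    (hG : Measurable (Function.uncurry G)) (a b : ℝ) :
    ∫⁻ y in Ioo a b, ∫⁻ u in Ioo a y, G u y = ∫⁻ u in Ioo a b, ∫⁻ y in Ioo u b, G u y := by
  set K : ℝ → ℝ → ℝ≥0∞ := fun u y => if u < y then G u y else 0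
  have hK : Measurable (Function.uncurry K) :=
    Measurable.ite (measurableSet_lt measurable_fst measurable_snd) hG measurable_const
  have hleft : ∀ y ∈ Ioo a b, ∫⁻ u in Ioo a b, K u y = ∫⁻ u in Ioo a y, G u y := fun y hy => by
    rw [show (fun u => K u y) = (Iio y).indicator (G · y) by ext u; simp [indicator, K],
      lintegral_indicator measurableSet_Iio, Measure.restrict_restrict measurableSet_Iio,
      Iio_inter_Ioo, min_eq_left hy.2.le]
  have hright : ∀ u ∈ Ioo a b, ∫⁻ y in Ioo a b, K u y = ∫⁻ y in Ioo u b, G u y := fun u hu => by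
    rw [show K u = (Ioi u).indicator (G u) by ext y; simp [indicator, K],
      lintegral_indicator measurableSet_Ioi, Measure.restrict_restrict measurableSet_Ioi,
      show Ioi u ∩ Ioo a b = Ioo u b by ext y; simp only [mem_inter_iff, mem_Ioi, mem_Ioo]; grind]
  rw [← setLIntegral_congr_fun measurableSet_Ioo hleft,
    ← setLIntegral_congr_fun measurableSet_Ioo hright]
  exact lintegral_lintegral_swap (hK.comp measurable_swap).aemeasurable

theorem tsum_neg_one_pow_mul_rpow_mul_neg_log {r u : ℝ} (hu0 : 0 < u) (hu1 : u < 1) :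
    ∑' ν : ℕ, (-1) ^ ν * (u ^ ((ν : ℝ) + r) * -log u) = u ^ r * -log u / (1 + u) := by
  have hterm : ∀ ν : ℕ, (-1) ^ ν * (u ^ ((ν : ℝ) + r) * -log u) = (-u) ^ ν * (u ^ r * -log u) :=
    fun ν => by rw [rpow_add hu0, rpow_natCast, neg_pow u]; ring
  have hgeom : ‖-u‖ < 1 := by rw [norm_neg, norm_of_nonneg hu0.le]; exact hu1
  rw [tsum_congr hterm, tsum_mul_right, tsum_geometric_of_norm_lt_one hgeom, sub_neg_eq_add]
  ring

theorem integral_rpow_mul_neg_log_div_one_add {r : ℝ} (hr : -1 < r) :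
    ∫ u in Ioo (0 : ℝ) 1, u ^ r * -log u / (1 + u) =
      ∑' ν : ℕ, (-1) ^ ν / ((ν : ℝ) + 1 + r) ^ 2 := by
  have hν : ∀ ν : ℕ, -1 < (ν : ℝ) + r := fun ν => by linarith [ν.cast_nonneg (α := ℝ)]
  set F : ℕ → ℝ → ℝ := fun ν u => (-1) ^ ν * (u ^ ((ν : ℝ) + r) * -log u)
  have hF : ∀ ν, ∫ u in Ioo (0 : ℝ) 1, F ν u = (-1) ^ ν / ((ν : ℝ) + 1 + r) ^ 2 := fun ν => by
    rw [integral_const_mul, integral_rpow_mul_neg_log (hν ν)]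
    ring
  have hF_norm : ∀ ν, ∫ u in Ioo (0 : ℝ) 1, ‖F ν u‖ = 1 / ((ν : ℝ) + 1 + r) ^ 2 := fun ν => by
    rw [add_right_comm, ← integral_rpow_mul_neg_log (hν ν)]
    refine setIntegral_congr_fun measurableSet_Ioo fun u hu => ?_
    have : 0 ≤ u ^ ((ν : ℝ) + r) * -log u :=
      mul_nonneg (rpow_nonneg hu.1.le _) (by linarith [log_neg hu.1 hu.2])
    rw [norm_mul, norm_pow, norm_neg, norm_one, one_pow, one_mul, norm_of_nonneg this]
  have hsummable : Summable fun ν : ℕ => 1 / ((ν : ℝ) + 1 + r) ^ 2 := by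
    have := (summable_one_div_nat_add_rpow (1 + r) 2).2 one_lt_two
    simpa [rpow_two, sq_abs, add_assoc] using this
  calc ∫ u in Ioo (0 : ℝ) 1, u ^ r * -log u / (1 + u)
      = ∫ u in Ioo (0 : ℝ) 1, ∑' ν, F ν u := setIntegral_congr_fun measurableSet_Ioo
        fun u hu => (tsum_neg_one_pow_mul_rpow_mul_neg_log hu.1 hu.2).symm
    _ = ∑' ν, ∫ u in Ioo (0 : ℝ) 1, F ν u := (integral_tsum_of_summable_integral_norm
        (fun ν => (integrableOn_rpow_mul_neg_log (hν ν)).const_mul _)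
        (hsummable.congr fun ν => (hF_norm ν).symm)).symm
    _ = _ := tsum_congr hF

theorem integral_unitSquare_eq_integral_neg_log (r : ℝ) :
    ∫ p in Ioo (0 : ℝ) 1 ×ˢ Ioo (0 : ℝ) 1, p.1 ^ r * p.2 ^ r / (1 - p.1 * (1 - p.2)) =
      ∫ u in Ioo (0 : ℝ) 1, 2 * (u ^ r * -log u / (1 + u)) := by
  have hF_nonneg : 0 ≤ᵐ[volume.restrict (Ioo (0 : ℝ) 1 ×ˢ Ioo (0 : ℝ) 1)]
      fun p : ℝ × ℝ => p.1 ^ r * p.2 ^ r / (1 - p.1 * (1 - p.2)) := by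
    filter_upwards [self_mem_ae_restrict (measurableSet_Ioo.prod measurableSet_Ioo)]
      with p ⟨⟨hx0, hx1⟩, ⟨hy0, hy1⟩⟩
    have : 0 < 1 - p.1 * (1 - p.2) := by nlinarith
    positivity
  have hg_nonneg : 0 ≤ᵐ[volume.restrict (Ioo (0 : ℝ) 1)]
      fun u => 2 * (u ^ r * -log u / (1 + u)) := by
    filter_upwards [self_mem_ae_restrict measurableSet_Ioo] with u ⟨hu0, hu1⟩
    have : 0 ≤ -log u := by linarith [log_neg hu0 hu1]
    have : 0 < 1 + u := by linarith
    positivity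
  rw [integral_eq_lintegral_of_nonneg_ae hF_nonneg
      (by fun_prop : Measurable _).aestronglyMeasurable,
    integral_eq_lintegral_of_nonneg_ae hg_nonneg
      (by fun_prop : Measurable _).aestronglyMeasurable]
  congr 1
  calc ∫⁻ p in Ioo (0 : ℝ) 1 ×ˢ Ioo (0 : ℝ) 1,
        ENNReal.ofReal (p.1 ^ r * p.2 ^ r / (1 - p.1 * (1 - p.2)))
      = ∫⁻ y in Ioo (0 : ℝ) 1, ∫⁻ x in Ioo (0 : ℝ) 1,
        ENNReal.ofReal (x ^ r * y ^ r / (1 - x * (1 - y))) := by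
        rw [Measure.volume_eq_prod, ← Measure.prod_restrict]
        exact lintegral_prod_symm _ (by fun_prop)
    _ = ∫⁻ y in Ioo (0 : ℝ) 1, ∫⁻ u in Ioo 0 y,
        ENNReal.ofReal (u ^ r * ((1 + u) * y - u)⁻¹) :=
        setLIntegral_congr_fun measurableSet_Ioo fun y hy =>
          lintegral_Ioo_rpow_mul_rpow_div_one_sub_mul hy.1
    _ = ∫⁻ u in Ioo (0 : ℝ) 1, ∫⁻ y in Ioo u 1,
        ENNReal.ofReal (u ^ r * ((1 + u) * y - u)⁻¹) :=
        lintegral_Ioo_lintegral_Ioo_swap (by fun_prop) 0 1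
    _ = ∫⁻ u in Ioo (0 : ℝ) 1, ENNReal.ofReal (2 * (u ^ r * -log u / (1 + u))) :=
        setLIntegral_congr_fun measurableSet_Ioo fun u hu =>
          lintegral_Ioo_rpow_mul_inv_mul_sub hu.1 hu.2

open MeasureTheory in
/-- For real `α < 1`,
`∬_{[0,1]²} x^{-α} y^{-α}/(1-x(1-y)) dx dy = 2 Z₂⁻(α) = 2 Σ_{ν≥1} (-1)^{ν-1}/(ν-α)²`. -/
theorem stmt7 (α : ℝ) (hα : α < 1) :
    (∫ p in Set.Ioo (0 : ℝ) 1 ×ˢ Set.Ioo (0 : ℝ) 1,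
        p.1 ^ (-α) * p.2 ^ (-α) / (1 - p.1 * (1 - p.2))) =
      2 * ∑' ν : ℕ, (-1 : ℝ) ^ ν / (((ν : ℝ) + 1) - α) ^ 2 := by
  rw [integral_unitSquare_eq_integral_neg_log, integral_const_mul,
    integral_rpow_mul_neg_log_div_one_add (neg_lt_neg hα)]
  simp only [sub_eq_add_neg]
end

section
/- Setting α = 0, the triple integral (1/2)∭_{[0,1]³} dx dy dz / (1-x(1-y(1-z))) equals ζ(3). -/
/-!
Expanding `1 / (1 - x u)`, `u = 1 - y (1 - z)`, as a geometric series and integrating term by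
term, `∫ xⁿ = 1 / (n + 1)` and `∬ uⁿ = H_{n+1} / (n + 1)`, so the integral is `∑ H_n / n²`.
Euler's identity `∑ H_n / n² = 2 ζ(3)` comes from evaluating `∑_{a,b ≥ 1} 1 / (a b (a + b))` twice:
summing over `a` first (a telescoping sum) gives `∑ H_b / b²`, while summing along the lines
`a + b = n`, where `1 / (a b) = (1 / a + 1 / b) / n`, gives `2 ∑ H_{n-1} / n²`. Since
`H_n / n² = H_{n-1} / n² + 1 / n³`, this forces `∑ H_{n-1} / n² = ζ(3)`.
-/

open Filter Topology MeasureTheory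

section

open Finset

lemma hasSum_sub_add_of_antitone {g : ℕ → ℝ} (hg : Antitone g)
    (hg0 : Tendsto g atTop (𝓝 0)) (m : ℕ) :
    HasSum (fun j ↦ g j - g (j + m)) (∑ i ∈ range m, g i) := by
  rw [hasSum_iff_tendsto_nat_of_nonneg (fun j ↦ sub_nonneg.2 (hg (j.le_add_right m)))]
  have hpartial (N : ℕ) : ∑ j ∈ range N, (g j - g (j + m)) =
      ∑ i ∈ range m, g i - ∑ i ∈ range m, g (N + i) := by
    have h₁ := sum_range_add g N m
    have h₂ := sum_range_add g m N
    rw [add_comm m N] at h₂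
    simp only [sum_sub_distrib, add_comm _ m]
    linarith
  simp_rw [hpartial]
  simpa using tendsto_const_nhds.sub
    (tendsto_finsetSum (range m) fun i _ ↦ hg0.comp (tendsto_add_atTop_nat i))

lemma harmonic_cast_eq_sum_range (n : ℕ) :
    (harmonic n : ℝ) = ∑ i ∈ range n, 1 / ((i : ℝ) + 1) := by
  simp [harmonic]

lemma harmonic_cast_nonneg (n : ℕ) : 0 ≤ (harmonic n : ℝ) := by
  rw [harmonic_cast_eq_sum_range]; positivity

lemma hasSum_one_div_mul_add {m : ℕ} (hm : m ≠ 0) :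
    HasSum (fun j : ℕ ↦ 1 / (((j : ℝ) + 1) * ((j : ℝ) + 1 + m))) (harmonic m / m) := by
  have hg : Antitone fun j : ℕ ↦ 1 / ((j : ℝ) + 1) :=
    fun i j hij ↦ one_div_le_one_div_of_le (by positivity) (by gcongr)
  have key := (hasSum_sub_add_of_antitone hg tendsto_one_div_add_atTop_nhds_zero_nat m).div_const m
  rw [← harmonic_cast_eq_sum_range] at key
  refine key.congr_fun fun j ↦ ?_
  have : (m : ℝ) ≠ 0 := by exact_mod_cast hm
  push_cast
  field_simp
  ring

lemma summable_harmonic_succ_div_sq :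
    Summable fun n : ℕ ↦ (harmonic (n + 1) : ℝ) / ((n : ℝ) + 1) ^ 2 := by
  refine ((Real.summable_one_div_nat_add_rpow 1 (3 / 2)).2 (by norm_num)).mul_left 3
    |>.of_nonneg_of_le (fun n ↦ div_nonneg (harmonic_cast_nonneg _) (by positivity)) fun n ↦ ?_
  set x : ℝ := n + 1
  have hx : 1 ≤ x := by simp [x]
  have hsqrt : x ^ (1 / 2 : ℝ) * x ^ (3 / 2 : ℝ) = x ^ 2 := by
    rw [← Real.rpow_add (by positivity)]; norm_num
  have hone : 1 ≤ x ^ (1 / 2 : ℝ) := Real.one_le_rpow hx (by norm_num)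
  have hH : (harmonic (n + 1) : ℝ) ≤ 3 * x ^ (1 / 2 : ℝ) := by
    have h₁ := harmonic_le_one_add_log (n + 1)
    have h₂ := Real.log_le_rpow_div (x := x) (by positivity) (ε := 1 / 2) (by norm_num)
    push_cast at h₁
    linarith
  rw [abs_of_pos (by positivity), div_le_iff₀ (by positivity), ← hsqrt]
  exact hH.trans_eq (by field_simp)

lemma HasSum.sum_antidiagonal {α : Type*} [AddCommMonoid α] [TopologicalSpace α] [ContinuousAdd α]
    [RegularSpace α] {f : ℕ × ℕ → α} {a : α} (h : HasSum f a) :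
    HasSum (fun n ↦ ∑ p ∈ antidiagonal n, f p) a :=
  (HasAntidiagonal.sigmaAntidiagonalEquivProd.hasSum_iff.2 h).sigma fun n ↦
    (antidiagonal n).hasSum f

lemma sum_antidiagonal_one_div_mul (n : ℕ) :
    ∑ p ∈ antidiagonal n, 1 / (((p.1 : ℝ) + 1) * ((p.2 : ℝ) + 1)) =
      2 * harmonic (n + 1) / ((n : ℝ) + 2) := by
  have hsplit : ∀ p ∈ antidiagonal n, 1 / (((p.1 : ℝ) + 1) * ((p.2 : ℝ) + 1)) =
      (1 / ((p.1 : ℝ) + 1) + 1 / ((p.2 : ℝ) + 1)) / ((n : ℝ) + 2) := by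
    intro p hp
    rw [HasAntidiagonal.mem_antidiagonal] at hp
    rw [← hp]
    push_cast
    field_simp
    ring
  have hfst : ∑ p ∈ antidiagonal n, 1 / ((p.1 : ℝ) + 1) = harmonic (n + 1) := by
    rw [Nat.sum_antidiagonal_eq_sum_range_succ_mk, harmonic_cast_eq_sum_range]
  have hsnd : ∑ p ∈ antidiagonal n, 1 / ((p.2 : ℝ) + 1) = harmonic (n + 1) := by
    rw [← hfst, ← Nat.sum_antidiagonal_swap]
    rfl
  rw [sum_congr rfl hsplit, ← sum_div, sum_add_distrib, hfst, hsnd, two_mul]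

lemma hasSum_one_div_mul_mul_add :
    HasSum (fun p : ℕ × ℕ ↦ 1 / (((p.1 : ℝ) + 1) * ((p.2 : ℝ) + 1) * ((p.1 : ℝ) + p.2 + 2)))
      (∑' n : ℕ, (harmonic (n + 1) : ℝ) / ((n : ℝ) + 1) ^ 2) := by
  have hfiber (k : ℕ) : HasSum (fun j : ℕ ↦ 1 / (((k : ℝ) + 1) * ((j : ℝ) + 1) * ((k : ℝ) + j + 2)))
      ((harmonic (k + 1) : ℝ) / ((k : ℝ) + 1) ^ 2) := by
    have h := (hasSum_one_div_mul_add k.succ_ne_zero).mul_left (1 / ((k : ℝ) + 1))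
    rw [Nat.cast_succ, one_div_mul_eq_div, div_div, ← sq] at h
    refine h.congr_fun fun j ↦ ?_
    field_simp
    ring
  have hsummable : Summable fun p : ℕ × ℕ ↦
      1 / (((p.1 : ℝ) + 1) * ((p.2 : ℝ) + 1) * ((p.1 : ℝ) + p.2 + 2)) :=
    (summable_prod_of_nonneg fun p ↦ by positivity).2
      ⟨fun k ↦ (hfiber k).summable, by
        simpa only [(hfiber _).tsum_eq] using summable_harmonic_succ_div_sq⟩
  rw [← tsum_congr fun k ↦ (hfiber k).tsum_eq, ← hsummable.tsum_prod' fun k ↦ (hfiber k).summable]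
  exact hsummable.hasSum

theorem hasSum_harmonic_succ_div_sq :
    HasSum (fun n : ℕ ↦ (harmonic (n + 1) : ℝ) / ((n : ℝ) + 1) ^ 2)
      (2 * ∑' n : ℕ, 1 / ((n : ℝ) + 1) ^ 3) := by
  set S := ∑' n : ℕ, (harmonic (n + 1) : ℝ) / ((n : ℝ) + 1) ^ 2
  have hZ : Summable fun n : ℕ ↦ 1 / ((n : ℝ) + 1) ^ 3 := by
    simpa using (summable_nat_add_iff 1).2 (Real.summable_one_div_nat_pow.2 (by norm_num : 1 < 3))
  have hdiag : HasSum (fun n : ℕ ↦ 2 * (harmonic (n + 1) : ℝ) / ((n : ℝ) + 2) ^ 2) S := by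
    refine hasSum_one_div_mul_mul_add.sum_antidiagonal.congr_fun fun n ↦ ?_
    have hterm : ∀ p ∈ antidiagonal n,
        1 / (((p.1 : ℝ) + 1) * ((p.2 : ℝ) + 1) * ((p.1 : ℝ) + p.2 + 2)) =
          1 / (((p.1 : ℝ) + 1) * ((p.2 : ℝ) + 1)) / ((n : ℝ) + 2) := by
      intro p hp
      rw [← (HasAntidiagonal.mem_antidiagonal.1 hp)]
      push_cast
      rw [div_div]
    rw [sum_congr rfl hterm, ← sum_div, sum_antidiagonal_one_div_mul]
    field_simp
  have hV : HasSum (fun n : ℕ ↦ (harmonic n : ℝ) / ((n : ℝ) + 1) ^ 2) (S / 2) := by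
    rw [← hasSum_nat_add_iff' 1, sum_range_one, harmonic_zero, Rat.cast_zero, zero_div, sub_zero]
    refine (hdiag.div_const 2).congr_fun fun n ↦ ?_
    push_cast
    ring
  have hsplit : HasSum (fun n : ℕ ↦ (harmonic (n + 1) : ℝ) / ((n : ℝ) + 1) ^ 2)
      (S / 2 + ∑' n : ℕ, 1 / ((n : ℝ) + 1) ^ 3) := by
    refine (hV.add hZ.hasSum).congr_fun fun n ↦ ?_
    rw [harmonic_succ]
    push_cast
    field_simp
  have hS := hsplit.unique summable_harmonic_succ_div_sq.hasSum
  rw [show 2 * ∑' n : ℕ, 1 / ((n : ℝ) + 1) ^ 3 = S by linarith]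
  exact summable_harmonic_succ_div_sq.hasSum

end

section

open Set

lemma intervalIntegral.integral_one_sub_mul_pow (a : ℝ) (n : ℕ) :
    ∫ t in (0 : ℝ)..1, (1 - a * t) ^ n = (∑ k ∈ Finset.range (n + 1), (1 - a) ^ k) / (n + 1) := by
  rcases eq_or_ne a 0 with rfl | ha
  · simp [field]
  have h := intervalIntegral.integral_comp_mul_add (a := 0) (b := 1) (fun t : ℝ ↦ t ^ n)
    (neg_ne_zero.2 ha) 1
  simp only [mul_zero, zero_add, mul_one, neg_mul, ← sub_eq_neg_add, integral_pow, one_pow,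
    smul_eq_mul] at h
  have hgeom := geom_sum_mul (1 - a) (n + 1)
  rw [sub_sub_cancel_left] at hgeom
  rw [h, ← hgeom]
  field_simp

lemma integral_Ioo_zero_one_eq_intervalIntegral (f : ℝ → ℝ) :
    ∫ x in Ioo (0 : ℝ) 1, f x = ∫ x in (0 : ℝ)..1, f x := by
  rw [intervalIntegral.integral_of_le zero_le_one, integral_Ioc_eq_integral_Ioo]

lemma volume_restrict_prod {α β : Type*} [MeasureSpace α] [MeasureSpace β]
    [SFinite (volume : Measure α)] [SFinite (volume : Measure β)] (s : Set α) (t : Set β) :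
    volume.restrict (s ×ˢ t) = (volume.restrict s).prod (volume.restrict t) := by
  rw [Measure.volume_eq_prod, Measure.prod_restrict]

lemma setIntegral_Ioo_prod_Ioo_one_sub_mul_one_sub_pow (n : ℕ) :
    ∫ q in Ioo (0 : ℝ) 1 ×ˢ Ioo (0 : ℝ) 1, (1 - q.1 * (1 - q.2)) ^ n =
      harmonic (n + 1) / ((n : ℝ) + 1) := by
  have hint : IntegrableOn (fun q : ℝ × ℝ ↦ (1 - q.1 * (1 - q.2)) ^ n)
      (Ioo (0 : ℝ) 1 ×ˢ Ioo (0 : ℝ) 1) :=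
    ((Continuous.continuousOn (by fun_prop)).integrableOn_compact
      (isCompact_Icc.prod isCompact_Icc)).mono_set
      (prod_mono Ioo_subset_Icc_self Ioo_subset_Icc_self)
  rw [IntegrableOn, volume_restrict_prod] at hint
  rw [volume_restrict_prod, integral_prod_symm _ hint]
  simp_rw [integral_Ioo_zero_one_eq_intervalIntegral, mul_comm _ (1 - _ : ℝ),
    intervalIntegral.integral_one_sub_mul_pow, sub_sub_cancel, intervalIntegral.integral_div,
    intervalIntegral.integral_finsetSum fun k _ ↦ intervalIntegral.intervalIntegrable_pow k,
    integral_pow, harmonic_cast_eq_sum_range]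
  norm_num

lemma mul_one_sub_mul_one_sub_mem_Ico {x y z : ℝ} (hx : x ∈ Ioo 0 1) (hy : y ∈ Ioo 0 1)
    (hz : z ∈ Ioo 0 1) : x * (1 - y * (1 - z)) ∈ Ico 0 1 := by
  obtain ⟨hx₀, hx₁⟩ := hx
  obtain ⟨hy₀, hy₁⟩ := hy
  obtain ⟨hz₀, hz₁⟩ := hz
  have hu₀ : 0 < 1 - y * (1 - z) := by nlinarith
  have hu₁ : 1 - y * (1 - z) < 1 := by nlinarith
  exact ⟨by positivity, by nlinarith⟩

lemma setIntegral_unitCube_pow (n : ℕ) :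
    ∫ p in Ioo (0 : ℝ) 1 ×ˢ Ioo (0 : ℝ) 1 ×ˢ Ioo (0 : ℝ) 1,
        (p.1 * (1 - p.2.1 * (1 - p.2.2))) ^ n =
      harmonic (n + 1) / ((n : ℝ) + 1) ^ 2 := by
  rw [volume_restrict_prod]
  simp_rw [mul_pow]
  rw [integral_prod_mul (fun x : ℝ ↦ x ^ n) (fun q : ℝ × ℝ ↦ (1 - q.1 * (1 - q.2)) ^ n),
    setIntegral_Ioo_prod_Ioo_one_sub_mul_one_sub_pow,
    integral_Ioo_zero_one_eq_intervalIntegral, integral_pow]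
  field_simp
  norm_num

lemma hasSum_setIntegral_unitCube :
    HasSum (fun n : ℕ ↦ (harmonic (n + 1) : ℝ) / ((n : ℝ) + 1) ^ 2)
      (∫ p in Ioo (0 : ℝ) 1 ×ˢ Ioo (0 : ℝ) 1 ×ˢ Ioo (0 : ℝ) 1,
        1 / (1 - p.1 * (1 - p.2.1 * (1 - p.2.2)))) := by
  set cube := Ioo (0 : ℝ) 1 ×ˢ Ioo (0 : ℝ) 1 ×ˢ Ioo (0 : ℝ) 1
  have hcube : MeasurableSet cube :=
    measurableSet_Ioo.prod (measurableSet_Ioo.prod measurableSet_Ioo)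
  have hbounds {p : ℝ × ℝ × ℝ} (hp : p ∈ cube) : p.1 * (1 - p.2.1 * (1 - p.2.2)) ∈ Ico 0 1 :=
    mul_one_sub_mul_one_sub_mem_Ico hp.1 hp.2.1 hp.2.2
  have hint (n : ℕ) :
      IntegrableOn (fun p : ℝ × ℝ × ℝ ↦ (p.1 * (1 - p.2.1 * (1 - p.2.2))) ^ n) cube :=
    ((Continuous.continuousOn (by fun_prop)).integrableOn_compact
      (isCompact_Icc.prod (isCompact_Icc.prod isCompact_Icc))).mono_set
      (prod_mono Ioo_subset_Icc_self (prod_mono Ioo_subset_Icc_self Ioo_subset_Icc_self))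
  have hnorm (n : ℕ) : ∫ p in cube, ‖(p.1 * (1 - p.2.1 * (1 - p.2.2))) ^ n‖ =
      harmonic (n + 1) / ((n : ℝ) + 1) ^ 2 := by
    rw [← setIntegral_unitCube_pow]
    exact setIntegral_congr_fun hcube fun p hp ↦ Real.norm_of_nonneg (pow_nonneg (hbounds hp).1 n)
  have hgeom : EqOn (fun p : ℝ × ℝ × ℝ ↦ ∑' n : ℕ, (p.1 * (1 - p.2.1 * (1 - p.2.2))) ^ n)
      (fun p ↦ 1 / (1 - p.1 * (1 - p.2.1 * (1 - p.2.2)))) cube := fun p hp ↦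
    (tsum_geometric_of_lt_one (hbounds hp).1 (hbounds hp).2).trans (one_div _).symm
  have h := hasSum_integral_of_summable_integral_norm hint
    (by simpa only [hnorm] using summable_harmonic_succ_div_sq)
  rw [setIntegral_congr_fun hcube hgeom] at h
  exact h.congr_fun fun n ↦ (setIntegral_unitCube_pow n).symm

end

open MeasureTheory in
/-- `(1/2)∭_{(0,1)³} dx dy dz/(1-x(1-y(1-z))) = ζ(3)`. -/
theorem stmt9 :
    (1 / 2) * (∫ p in Set.Ioo (0 : ℝ) 1 ×ˢ Set.Ioo (0 : ℝ) 1 ×ˢ Set.Ioo (0 : ℝ) 1,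
        1 / (1 - p.1 * (1 - p.2.1 * (1 - p.2.2)))) =
      ∑' ν : ℕ, 1 / (((ν : ℝ) + 1)) ^ 3 := by
  rw [hasSum_setIntegral_unitCube.unique hasSum_harmonic_succ_div_sq]
  ring
end

section
/- The double integral ∬_{[0,1]²} dx dy/(1-xy) equals ζ(2) = π²/6. -/
open MeasureTheory in
/-- `∬_{[0,1]²} dx dy/(1-xy) = ζ(2) = π²/6`. -/
theorem stmt14 :
    (∫ p in Set.Ioo (0 : ℝ) 1 ×ˢ Set.Ioo (0 : ℝ) 1, 1 / (1 - p.1 * p.2)) =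
      Real.pi ^ 2 / 6 := by
  have hmeas : MeasurableSet (Set.Ioo (0:ℝ) 1 ×ˢ Set.Ioo (0:ℝ) 1) :=
    measurableSet_Ioo.prod measurableSet_Ioo
  -- single integral of x^n over Ioo 0 1
  have hsingle : ∀ n : ℕ, (∫ x in Set.Ioo (0:ℝ) 1, x ^ n) = 1 / (n + 1) := by
    intro n
    rw [← integral_Ioc_eq_integral_Ioo, ← intervalIntegral.integral_of_le zero_le_one,
      integral_pow]
    simp
  -- each term is integrable on the square
  have hint : ∀ n : ℕ, IntegrableOn (fun p : ℝ × ℝ => (p.1 * p.2) ^ n)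
      (Set.Ioo (0:ℝ) 1 ×ˢ Set.Ioo (0:ℝ) 1) := by
    intro n
    have h1 : IntegrableOn (fun p : ℝ × ℝ => (p.1 * p.2) ^ n)
        (Set.Icc 0 1 ×ˢ Set.Icc 0 1) :=
      ((continuous_fst.mul continuous_snd).pow n).continuousOn.integrableOn_compact
        (isCompact_Icc.prod isCompact_Icc)
    exact h1.mono_set (Set.prod_mono Set.Ioo_subset_Icc_self Set.Ioo_subset_Icc_self)
  -- compute the integral of each term
  have hterm : ∀ n : ℕ, (∫ p in Set.Ioo (0:ℝ) 1 ×ˢ Set.Ioo (0:ℝ) 1, (p.1 * p.2) ^ n)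
      = (1 / (n + 1)) * (1 / (n + 1)) := by
    intro n
    have := setIntegral_prod_mul (μ := volume) (ν := volume) (fun x : ℝ => x ^ n) (fun y : ℝ => y ^ n)
      (Set.Ioo (0:ℝ) 1) (Set.Ioo (0:ℝ) 1)
    rw [← Measure.volume_eq_prod] at this
    simp only [mul_pow] at *
    rw [this, hsingle]
  -- summability of the term integrals
  have hsum : Summable (fun n : ℕ => (1 : ℝ) / (n + 1) * (1 / (n + 1))) := by
    have : Summable (fun n : ℕ => (1 : ℝ) / ((n : ℝ) + 1) ^ 2) :=
      (summable_nat_add_iff 1).2 (Real.summable_one_div_nat_pow.2 one_lt_two) |>.congr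
        (by intro n; push_cast; ring_nf)
    exact this.congr fun n => by rw [sq, div_mul_div_comm, one_mul]
  -- rewrite integrand as tsum on the set
  have hcongr : (∫ p in Set.Ioo (0:ℝ) 1 ×ˢ Set.Ioo (0:ℝ) 1, 1 / (1 - p.1 * p.2))
      = ∫ p in Set.Ioo (0:ℝ) 1 ×ˢ Set.Ioo (0:ℝ) 1, ∑' n : ℕ, (p.1 * p.2) ^ n := by
    refine setIntegral_congr_fun hmeas fun p hp => ?_
    obtain ⟨⟨hx0, hx1⟩, hy0, hy1⟩ := hp
    have h0 : 0 ≤ p.1 * p.2 := by positivity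
    have h1 : p.1 * p.2 < 1 := by
      calc p.1 * p.2 < 1 * 1 := by apply mul_lt_mul' hx1.le hy1 hy0.le one_pos
      _ = 1 := one_mul 1
    rw [tsum_geometric_of_lt_one h0 h1, one_div]
  rw [hcongr]
  -- swap integral and sum
  have hswap := MeasureTheory.integral_tsum_of_summable_integral_norm
    (μ := volume.restrict (Set.Ioo (0:ℝ) 1 ×ˢ Set.Ioo (0:ℝ) 1))
    (F := fun (n : ℕ) (p : ℝ × ℝ) => (p.1 * p.2) ^ n) hint ?_
  · rw [← hswap]
    -- now compute the sum
    have : (fun n : ℕ => ∫ p in Set.Ioo (0:ℝ) 1 ×ˢ Set.Ioo (0:ℝ) 1, (p.1 * p.2) ^ n)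
        = fun n : ℕ => (1 : ℝ) / ((n : ℝ) + 1) ^ 2 := by
      funext n; rw [hterm, div_mul_div_comm, one_mul, ← sq]
    rw [this]
    have hz := hasSum_zeta_two
    have hz' : HasSum (fun n : ℕ => (1 : ℝ) / ((n : ℝ) + 1) ^ 2) (Real.pi ^ 2 / 6) := by
      have := (hasSum_nat_add_iff' (f := fun n : ℕ => (1 : ℝ) / (n : ℝ) ^ 2) 1).2 hz
      simp only [Finset.range_one, Finset.sum_singleton, Nat.cast_zero] at this
      simpa using this
    exact hz'.tsum_eq
  · -- summability of integrals of norms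
    refine hsum.congr fun n => ?_
    have : (∫ p in Set.Ioo (0:ℝ) 1 ×ˢ Set.Ioo (0:ℝ) 1, ‖(p.1 * p.2) ^ n‖)
        = ∫ p in Set.Ioo (0:ℝ) 1 ×ˢ Set.Ioo (0:ℝ) 1, (p.1 * p.2) ^ n := by
      refine setIntegral_congr_fun hmeas fun p hp => ?_
      obtain ⟨⟨hx0, _⟩, hy0, _⟩ := hp
      rw [Real.norm_of_nonneg (by positivity)]
    rw [this, hterm]
end

section
/- Let α be real with α < 1 and let A_{jk}(n), j=0,1,2, k=0,…,n, be the coefficients in the partial-fraction decomposition R_n(t) = Σ_{j=0}^2 Σ_{k=0}^n A_{jk}(n)/(t-α+k)^{3-j} of R_n(t) = n!·(2t-2α+n)·∏_{j=1}^n(t-j)·∏_{j=n+1}^{2n}(t-2α+j)/(∏_{k=0}^n(t-α+k))³. Then u_{0n} := Σ_{k=0}^n (-1)^k A_{0k}(n) = 0 and u_{2n} := Σ_{k=0}^n (-1)^k A_{2k}(n) = 0 for all n ≥ 0. -/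
open Finset

lemma div_sign_mul (a b : ℝ) (m : ℕ) : a / ((-1:ℝ)^m * b) = (-1)^m * a / b := by
  rw [div_mul_eq_div_div, div_eq_mul_inv a, ← inv_pow, inv_neg, inv_one, mul_comm]

lemma div_neg_pow (a x : ℝ) (m : ℕ) : a / (-x) ^ m = (-1) ^ m * a / x ^ m := by
  rw [neg_pow, div_sign_mul]

lemma neg_one_pow_sub_eq (n k : ℕ) (h : k ≤ n) : (-1:ℝ)^(n-k) = (-1)^n * (-1)^k := by
  have h1 : (-1:ℝ)^(n-k) * (-1)^k = (-1)^n := by rw [← pow_add]; congr 1; omega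
  have h2 : (-1:ℝ)^k * (-1)^k = 1 := by rw [← pow_add, ← two_mul, pow_mul]; norm_num
  calc (-1:ℝ)^(n-k) = (-1)^(n-k) * ((-1)^k * (-1)^k) := by rw [h2, mul_one]
    _ = ((-1)^(n-k) * (-1)^k) * (-1)^k := by ring
    _ = (-1)^n * (-1)^k := by rw [h1]
lemma extraction (α : ℝ) (n : ℕ) (c : ℕ → ℕ → ℝ)
    (h : ∀ t : ℝ, (∀ k : ℕ, k ≤ n → t - α + k ≠ 0) →
      ∑ j ∈ range 3, ∑ k ∈ range (n + 1), c j k / (t - α + k) ^ (3 - j) = 0) :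
    ∀ j, j < 3 → ∀ k, k ≤ n → c j k = 0 := by
  set S : Set ℝ := {t | ∀ k : ℕ, k ≤ n → t - α + k ≠ 0} with hS
  have key : ∀ k₀, k₀ ≤ n → c 0 k₀ = 0 ∧ c 1 k₀ = 0 ∧ c 2 k₀ = 0 := by
    intro k₀ hk₀
    set a : ℝ := α - k₀ with ha
    have ha0 : a - α + (k₀:ℝ) = 0 := by rw [ha]; ring
    have hV : ∀ᶠ t in nhds a, ∀ k ∈ range (n+1), k ≠ k₀ → t - α + (k:ℝ) ≠ 0 := by
      rw [Filter.eventually_all_finset]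
      intro k hk
      by_cases hkk : k = k₀
      · exact Filter.Eventually.of_forall (fun t hcon => absurd hkk hcon)
      · have hne : a ≠ α - (k:ℝ) := by
          have : (k:ℝ) ≠ (k₀:ℝ) := by exact_mod_cast hkk
          rw [ha]; intro hcon; apply this; linarith
        filter_upwards [eventually_ne_nhds hne] with t ht _ hcon
        exact ht (by linarith)
    have hne : (nhdsWithin a S).NeBot := by
      set V : Set ℝ := {t | ∀ k ∈ range (n+1), k ≠ k₀ → t - α + (k:ℝ) ≠ 0} with hVdef
      have hsub : V ∩ {a}ᶜ ⊆ S := by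
        rintro t ⟨htV, hta⟩ k hk
        by_cases hkk : k = k₀
        · subst hkk
          intro hcon
          exact hta (by simp only [Set.mem_singleton_iff]; rw [ha]; linarith)
        · exact htV k (Finset.mem_range.mpr (by omega)) hkk
      have hVmem : V ∈ nhdsWithin a {a}ᶜ :=
        nhdsWithin_le_nhds hV
      have heq : nhdsWithin a (V ∩ {a}ᶜ) = nhdsWithin a {a}ᶜ :=
        nhdsWithin_inter_of_mem hVmem
      have : (nhdsWithin a (V ∩ {a}ᶜ)).NeBot := by
        rw [heq]; exact inferInstance
      exact this.mono (nhdsWithin_mono a hsub)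
    have main : ∀ p : ℕ, 1 ≤ p → (∀ j, j < 3 → p < 3 - j → c j k₀ = 0) →
        (∑ j ∈ range 3, c j k₀ * (0:ℝ) ^ (p - (3 - j))) = 0 := by
      intro p hp hc
      set F : ℝ → ℝ := fun t => ∑ j ∈ range 3, ∑ k ∈ range (n+1),
        if k = k₀ then c j k₀ * (t - α + (k₀:ℝ)) ^ (p - (3 - j))
        else c j k * (t - α + (k₀:ℝ)) ^ p / (t - α + (k:ℝ)) ^ (3 - j) with hF
      have hFS : ∀ t ∈ S, F t = 0 := by
        intro t ht
        have h0 := h t ht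
        have hx : t - α + (k₀:ℝ) ≠ 0 := ht k₀ hk₀
        have : F t = (t - α + (k₀:ℝ)) ^ p *
            (∑ j ∈ range 3, ∑ k ∈ range (n + 1), c j k / (t - α + k) ^ (3 - j)) := by
          rw [hF, Finset.mul_sum]
          refine Finset.sum_congr rfl (fun j hj => ?_)
          rw [Finset.mul_sum]
          refine Finset.sum_congr rfl (fun k hk => ?_)
          by_cases hkk : k = k₀
          · subst hkk
            rw [if_pos rfl]
            rcases le_or_gt (3 - j) p with hle | hlt
            · rw [pow_sub₀ _ hx hle]; ring
            · rw [hc j (Finset.mem_range.mp hj) hlt]; simp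
          · rw [if_neg hkk]; ring
        rw [this, h0, mul_zero]
      have hcont : ContinuousAt F a := by
        rw [hF]
        apply tendsto_finset_sum
        intro j hj
        apply tendsto_finset_sum
        intro k hk
        by_cases hkk : k = k₀
        · subst hkk
          simp only [eq_self_iff_true, if_true]
          exact (Continuous.continuousAt (by fun_prop))
        · simp only [if_neg hkk]
          have hden : (a - α + (k:ℝ)) ^ (3 - j) ≠ 0 := by
            apply pow_ne_zero
            have : (k:ℝ) ≠ (k₀:ℝ) := by exact_mod_cast hkk
            rw [ha]; intro hcon; exact this (by linarith)
          exact ContinuousAt.div (by fun_prop) (by fun_prop) hden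
      have h1 : Filter.Tendsto F (nhdsWithin a S) (nhds (F a)) :=
        hcont.continuousWithinAt.tendsto
      have h2 : Filter.Tendsto F (nhdsWithin a S) (nhds 0) := by
        apply Filter.Tendsto.congr' _ tendsto_const_nhds
        filter_upwards [self_mem_nhdsWithin] with t ht
        exact (hFS t ht).symm
      have hFa : F a = 0 := tendsto_nhds_unique h1 h2
      have heval : F a = ∑ j ∈ range 3, c j k₀ * (0:ℝ) ^ (p - (3 - j)) := by
        rw [hF]
        refine Finset.sum_congr rfl (fun j hj => ?_)
        rw [Finset.sum_eq_single k₀]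
        · rw [if_pos rfl, ha0]
        · intro k hk hkne
          rw [if_neg hkne, ha0, zero_pow (by omega), mul_zero, zero_div]
        · intro hcon; exact absurd (Finset.mem_range.mpr (by omega)) hcon
      rw [← heval]; exact hFa
    have h0 : c 0 k₀ = 0 := by
      have := main 3 (by norm_num) (by intro j hj hlt; omega)
      simpa [Finset.sum_range_succ] using this
    have h1 : c 1 k₀ = 0 := by
      have := main 2 (by norm_num) (by intro j hj hlt; interval_cases j <;> simp_all)
      simp only [Finset.sum_range_succ, Finset.sum_range_zero] at this
      norm_num [h0] at this
      exact this
    have h2 : c 2 k₀ = 0 := by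
      have := main 1 (by norm_num)
        (by intro j hj hlt; interval_cases j <;> first | exact h0 | exact h1 | omega)
      simp only [Finset.sum_range_succ, Finset.sum_range_zero] at this
      norm_num [h0, h1] at this
      exact this
    exact ⟨h0, h1, h2⟩
  intro j hj k hk
  interval_cases j
  · exact (key k hk).1
  · exact (key k hk).2.1
  · exact (key k hk).2.2
lemma Icc_shift (n : ℕ) : Icc (n+1) (2*n) = (Icc 1 n).map (addRightEmbedding n) := by
  rw [Finset.map_add_right_Icc]; congr 1 <;> omega

lemma Rsymm (α : ℝ) (n : ℕ) (t : ℝ) :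
    (Nat.factorial n : ℝ) * (2 * (2*α - n - t) - 2 * α + n) *
      ((∏ j ∈ Icc 1 n, ((2*α - n - t) - (j : ℝ))) *
        ∏ j ∈ Icc (n + 1) (2 * n), ((2*α - n - t) - 2 * α + (j : ℝ))) /
      (∏ k ∈ range (n + 1), ((2*α - n - t) - α + (k : ℝ))) ^ 3 =
    (-1)^n * ((Nat.factorial n : ℝ) * (2 * t - 2 * α + n) *
      ((∏ j ∈ Icc 1 n, (t - (j : ℝ))) *
        ∏ j ∈ Icc (n + 1) (2 * n), (t - 2 * α + (j : ℝ))) /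
      (∏ k ∈ range (n + 1), (t - α + (k : ℝ))) ^ 3) := by
  have hsign : ∀ (s : Finset ℕ) (f : ℕ → ℝ), (∏ j ∈ s, (-(f j))) = (-1:ℝ)^s.card * ∏ j ∈ s, f j := by
    intro s f
    rw [← Finset.prod_const, ← Finset.prod_mul_distrib]
    exact Finset.prod_congr rfl fun j _ => by ring
  have hcard : (Icc 1 n).card = n := by rw [Nat.card_Icc]; omega
  have hb : (∏ j ∈ Icc 1 n, ((2*α - n - t) - (j : ℝ)))
      = (-1:ℝ)^n * ∏ j ∈ Icc (n + 1) (2 * n), (t - 2 * α + (j : ℝ)) := by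
    rw [Icc_shift, Finset.prod_map]
    have h1 : ∀ j ∈ Icc 1 n, ((2*α - n - t) - (j : ℝ))
        = -(t - 2*α + (((addRightEmbedding n) j : ℕ) : ℝ)) := by
      intro j hj
      simp only [addRightEmbedding_apply]
      push_cast; ring
    rw [Finset.prod_congr rfl h1, hsign, hcard]
  have hc : (∏ j ∈ Icc (n + 1) (2 * n), ((2*α - n - t) - 2 * α + (j : ℝ)))
      = (-1:ℝ)^n * ∏ j ∈ Icc 1 n, (t - (j : ℝ)) := by
    rw [Icc_shift, Finset.prod_map]
    have h1 : ∀ j ∈ Icc 1 n, ((2*α - n - t) - 2 * α + (((addRightEmbedding n) j : ℕ) : ℝ))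
        = -(t - (j : ℝ)) := by
      intro j hj
      simp only [addRightEmbedding_apply]
      push_cast; ring
    rw [Finset.prod_congr rfl h1, hsign, hcard]
  have hd : (∏ k ∈ range (n + 1), ((2*α - n - t) - α + (k : ℝ)))
      = (-1:ℝ)^(n+1) * ∏ k ∈ range (n + 1), (t - α + (k : ℝ)) := by
    have h1 : ∀ k ∈ range (n + 1), ((2*α - n - t) - α + (k : ℝ))
        = -((fun m : ℕ => t - α + (m : ℝ)) (n + 1 - 1 - k)) := by
      intro k hk
      have hk' : k ≤ n := by simpa [Nat.lt_succ_iff] using hk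
      simp only [Nat.add_sub_cancel]
      rw [Nat.cast_sub hk']
      ring
    rw [Finset.prod_congr rfl h1, hsign, Finset.card_range]
    congr 1
    exact Finset.prod_range_reflect (fun m : ℕ => t - α + (m : ℝ)) (n+1)
  rw [hb, hc, hd]
  rw [show ((-1:ℝ)^(n+1) * ∏ k ∈ range (n + 1), (t - α + (k : ℝ))) ^ 3
      = (-1:ℝ)^(n+1) * (∏ k ∈ range (n + 1), (t - α + (k : ℝ))) ^ 3 by
    rw [mul_pow, ← pow_mul]
    congr 1
    rcases Nat.even_or_odd (n+1) with he | ho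
    · rw [he.neg_one_pow, (he.mul_right 3).neg_one_pow]
    · rw [ho.neg_one_pow, (ho.mul (by decide : Odd 3)).neg_one_pow]]
  rw [div_sign_mul, ← mul_div_assoc]
  congr 1
  rw [pow_succ]
  obtain ⟨u, hu⟩ : ∃ u : ℝ, (-1:ℝ)^n = u := ⟨_, rfl⟩
  have hsq : u * u = 1 := by rw [← hu, ← pow_add, ← two_mul, pow_mul]; norm_num
  rw [hu]
  linear_combination (u * (Nat.factorial n : ℝ) * (2 * t - 2 * α + n) *
      (∏ j ∈ Icc 1 n, (t - (j : ℝ))) *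
      (∏ j ∈ Icc (n + 1) (2 * n), (t - 2 * α + (j : ℝ)))) * hsq

lemma alt_sum_zero (n : ℕ) (B : ℕ → ℝ) (hB : ∀ k ≤ n, B (n-k) = -((-1:ℝ)^n * B k)) :
    ∑ k ∈ range (n+1), (-1:ℝ)^k * B k = 0 := by
  have hrefl : ∑ k ∈ range (n+1), (-1:ℝ)^k * B k
      = ∑ k ∈ range (n+1), -((-1:ℝ)^k * B k) := by
    rw [← Finset.sum_range_reflect (fun m => (-1:ℝ)^m * B m) (n+1)]
    refine Finset.sum_congr rfl fun k hk => ?_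
    have hk' : k ≤ n := Nat.lt_succ_iff.mp (Finset.mem_range.mp hk)
    simp only [Nat.add_sub_cancel]
    rw [hB k hk', neg_one_pow_sub_eq n k hk']
    have h2 : (-1:ℝ)^n * (-1)^n = 1 := by rw [← pow_add, ← two_mul, pow_mul]; norm_num
    linear_combination (-((-1:ℝ)^k * B k)) * h2
  rw [Finset.sum_neg_distrib] at hrefl
  linarith

open Finset in
/-- If `A j k` are the partial-fraction coefficients of
`R_n(t) = Σ_{j=0}^2 Σ_{k=0}^n A_{jk}/(t-α+k)^{3-j}`, then
`u_{0n} = Σ_k (-1)^k A_{0k} = 0` and `u_{2n} = Σ_k (-1)^k A_{2k} = 0`. -/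
theorem stmt16 (α : ℝ) (hα : α < 1) (n : ℕ)
    (A : ℕ → ℕ → ℝ)
    (hA : ∀ t : ℝ, (∀ k : ℕ, k ≤ n → t - α + k ≠ 0) →
      (Nat.factorial n : ℝ) * (2 * t - 2 * α + n) *
        ((∏ j ∈ Icc 1 n, (t - (j : ℝ))) *
          ∏ j ∈ Icc (n + 1) (2 * n), (t - 2 * α + (j : ℝ))) /
        (∏ k ∈ range (n + 1), (t - α + (k : ℝ))) ^ 3 =
      ∑ j ∈ range 3, ∑ k ∈ range (n + 1), A j k / (t - α + k) ^ (3 - j)) :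
    (∑ k ∈ range (n + 1), (-1 : ℝ) ^ k * A 0 k) = 0 ∧
    (∑ k ∈ range (n + 1), (-1 : ℝ) ^ k * A 2 k) = 0 := by
  have hczero : ∀ j, j < 3 → ∀ k, k ≤ n →
      ((-1:ℝ)^(3-j) * A j (n-k) - (-1)^n * A j k) = 0 := by
    apply extraction α n (fun j k => (-1:ℝ)^(3-j) * A j (n-k) - (-1)^n * A j k)
    intro t ht
    set s : ℝ := 2*α - n - t with hs
    have hts : ∀ k : ℕ, k ≤ n → s - α + k ≠ 0 := by
      intro k hk
      have h1 := ht (n - k) (by omega)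
      have h2 : s - α + (k:ℝ) = -(t - α + ((n-k:ℕ):ℝ)) := by
        rw [Nat.cast_sub hk, hs]; ring
      rw [h2]
      exact neg_ne_zero.mpr h1
    have e1 := hA t ht
    have e2 := hA s hts
    have sym := Rsymm α n t
    rw [← hs] at sym
    have key : ∑ j ∈ range 3, ∑ k ∈ range (n+1), A j k / (s - α + k)^(3-j)
        = (-1:ℝ)^n * ∑ j ∈ range 3, ∑ k ∈ range (n+1), A j k / (t - α + k)^(3-j) := by
      rw [← e2, ← e1]; exact sym
    have refl : ∀ j ∈ range 3, ∑ k ∈ range (n+1), A j k / (s - α + k)^(3-j)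
        = ∑ k ∈ range (n+1), (-1:ℝ)^(3-j) * A j (n-k) / (t - α + (k:ℝ))^(3-j) := by
      intro j hj
      have step1 : ∀ k ∈ range (n+1), A j k / (s - α + k)^(3-j)
          = (fun m : ℕ => (-1:ℝ)^(3-j) * A j (n-m) / (t - α + (m:ℝ))^(3-j)) (n+1-1-k) := by
        intro k hk
        have hk' : k ≤ n := Nat.lt_succ_iff.mp (Finset.mem_range.mp hk)
        simp only [Nat.add_sub_cancel]
        have hsk : s - α + (k:ℝ) = -(t - α + ((n-k:ℕ):ℝ)) := by
          rw [Nat.cast_sub hk', hs]; ring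
        rw [hsk, div_neg_pow, Nat.sub_sub_self hk']
      rw [Finset.sum_congr rfl step1]
      exact Finset.sum_range_reflect
        (fun m : ℕ => (-1:ℝ)^(3-j) * A j (n-m) / (t - α + (m:ℝ))^(3-j)) (n+1)
    calc ∑ j ∈ range 3, ∑ k ∈ range (n+1),
          ((-1:ℝ)^(3-j) * A j (n-k) - (-1)^n * A j k) / (t - α + (k:ℝ))^(3-j)
        = (∑ j ∈ range 3, ∑ k ∈ range (n+1),
            (-1:ℝ)^(3-j) * A j (n-k) / (t - α + (k:ℝ))^(3-j))
          - (-1:ℝ)^n * ∑ j ∈ range 3, ∑ k ∈ range (n+1),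
            A j k / (t - α + (k:ℝ))^(3-j) := by
          rw [Finset.mul_sum, ← Finset.sum_sub_distrib]
          refine Finset.sum_congr rfl fun j hj => ?_
          rw [Finset.mul_sum, ← Finset.sum_sub_distrib]
          refine Finset.sum_congr rfl fun k hk => ?_
          rw [sub_div]
          ring
      _ = 0 := by
          rw [← Finset.sum_congr rfl refl, key, sub_self]
  constructor
  · apply alt_sum_zero n (A 0)
    intro k hk
    have := hczero 0 (by norm_num) k hk
    norm_num at this
    linarith
  · apply alt_sum_zero n (A 2)
    intro k hk
    have := hczero 2 (by norm_num) k hk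
    norm_num at this
    linarith
end

section
/- For α = 0, the recursion (n+1)²·(n+1)²·5n²·u_{n+1} - (55n⁶+165n⁵+180n⁴+85n³+15n²)·u_n - n²·n²·5(n+1)²·u_{n-1} = 0 is satisfied by u_n = Σ_{k=0}^n C(n,k)²C(n+k,k), Apéry's sequence for ζ(2). -/
open Finset

/-- Apéry's summand. -/
noncomputable def apS (n k : ℕ) : ℝ := (n.choose k : ℝ) ^ 2 * ((n + k).choose k : ℝ)

/-- Zeilberger certificate function. -/
noncomputable def apG (n : ℕ) : ℕ → ℝ
  | 0 => 0
  | (j + 1) =>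
      (((j : ℝ) + 1) ^ 2 + ((j : ℝ) + 1) + 6 * (n : ℝ) * ((j : ℝ) + 1)
          - 11 * (n : ℝ) ^ 2 - 15 * (n : ℝ) - 4) *
        (n.choose j : ℝ) ^ 2 * ((n + j).choose j : ℝ)

lemma apPoint (m k : ℕ) :
    ((m : ℝ) + 2) ^ 2 * apS (m + 2) k
      - (11 * ((m : ℝ) + 1) ^ 2 + 11 * ((m : ℝ) + 1) + 3) * apS (m + 1) k
      - ((m : ℝ) + 1) ^ 2 * apS m k
      = apG (m + 1) (k + 1) - apG (m + 1) k := by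
  rcases k with _ | j
  · simp only [apS, apG, Nat.choose_zero_right, Nat.add_zero, Nat.cast_one]
    push_cast
    ring
  · simp only [apS, apG,
      show m + 2 + (j + 1) = m + j + 3 from by omega,
      show m + 1 + (j + 1) = m + j + 2 from by omega,
      show m + (j + 1) = m + j + 1 from by omega,
      show m + 1 + j = m + j + 1 from by omega]
    by_cases hj : j ≤ m
    · -- main case: 1 ≤ k = j+1 ≤ m+1
      have R1 := Nat.choose_mul_succ_eq (m + 1) (j + 1)
      have R2 := Nat.choose_mul_succ_eq m (j + 1)
      have R3 := Nat.choose_mul_succ_eq (m + j + 2) (j + 1)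
      have R4 := Nat.choose_mul_succ_eq (m + j + 1) (j + 1)
      have R5 := Nat.choose_succ_right_eq (m + 1) j
      have R6 := Nat.add_one_mul_choose_eq (m + j + 1) j
      rw [show m + 1 + 1 - (j + 1) = m + 1 - j from by omega,
        show m + 1 + 1 = m + 2 from rfl] at R1
      rw [show m + 1 - (j + 1) = m - j from by omega] at R2
      rw [show m + j + 2 + 1 - (j + 1) = m + 2 from by omega,
        show m + j + 2 + 1 = m + j + 3 from rfl] at R3
      rw [show m + j + 1 + 1 - (j + 1) = m + 1 from by omega,
        show m + j + 1 + 1 = m + j + 2 from rfl] at R4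
      rw [show m + 1 - j = m + 1 - j from rfl] at R5
      have hR6 : (m + j + 2) * (m + j + 1).choose j = (m + j + 2).choose (j + 1) * (j + 1) := by
        simpa [Nat.succ_eq_add_one] using R6
      -- cast to ℝ
      have r1 : ((m + 1).choose (j + 1) : ℝ) * ((m : ℝ) + 2)
          = ((m + 2).choose (j + 1) : ℝ) * ((m : ℝ) + 1 - (j : ℝ)) := by
        have := congrArg (Nat.cast : ℕ → ℝ) R1
        push_cast [Nat.cast_sub (show j ≤ m + 1 from by omega)] at this
        linear_combination this
      have r2 : (m.choose (j + 1) : ℝ) * ((m : ℝ) + 1)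
          = ((m + 1).choose (j + 1) : ℝ) * ((m : ℝ) - (j : ℝ)) := by
        have := congrArg (Nat.cast : ℕ → ℝ) R2
        push_cast [Nat.cast_sub hj] at this
        linear_combination this
      have r3 : ((m + j + 2).choose (j + 1) : ℝ) * ((m : ℝ) + (j : ℝ) + 3)
          = ((m + j + 3).choose (j + 1) : ℝ) * ((m : ℝ) + 2) := by
        have := congrArg (Nat.cast : ℕ → ℝ) R3
        push_cast at this
        linear_combination this
      have r4 : ((m + j + 1).choose (j + 1) : ℝ) * ((m : ℝ) + (j : ℝ) + 2)
          = ((m + j + 2).choose (j + 1) : ℝ) * ((m : ℝ) + 1) := by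
        have := congrArg (Nat.cast : ℕ → ℝ) R4
        push_cast at this
        linear_combination this
      have r5 : ((m + 1).choose (j + 1) : ℝ) * ((j : ℝ) + 1)
          = ((m + 1).choose j : ℝ) * ((m : ℝ) + 1 - (j : ℝ)) := by
        have := congrArg (Nat.cast : ℕ → ℝ) R5
        push_cast [Nat.cast_sub (show j ≤ m + 1 from by omega)] at this
        linear_combination this
      have r6 : ((m : ℝ) + (j : ℝ) + 2) * ((m + j + 1).choose j : ℝ)
          = ((m + j + 2).choose (j + 1) : ℝ) * ((j : ℝ) + 1) := by
        have := congrArg (Nat.cast : ℕ → ℝ) hR6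
        push_cast at this
        linear_combination this
      have n1 : ((m : ℝ) + 1 - (j : ℝ)) ≠ 0 := by
        have : (j : ℝ) ≤ (m : ℝ) := by exact_mod_cast hj
        intro h; linarith
      have n2 : ((m : ℝ) + 1) ≠ 0 := by positivity
      have n3 : ((m : ℝ) + 2) ≠ 0 := by positivity
      have n4 : ((m : ℝ) + (j : ℝ) + 2) ≠ 0 := by positivity
      have hc1 : ((m + 2).choose (j + 1) : ℝ)
          = ((m + 1).choose (j + 1) : ℝ) * ((m : ℝ) + 2) / ((m : ℝ) + 1 - (j : ℝ)) := by
        rw [eq_div_iff n1]; linear_combination -r1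
      have hc2 : (m.choose (j + 1) : ℝ)
          = ((m + 1).choose (j + 1) : ℝ) * ((m : ℝ) - (j : ℝ)) / ((m : ℝ) + 1) := by
        rw [eq_div_iff n2]; linear_combination r2
      have hd1 : ((m + j + 3).choose (j + 1) : ℝ)
          = ((m + j + 2).choose (j + 1) : ℝ) * ((m : ℝ) + (j : ℝ) + 3) / ((m : ℝ) + 2) := by
        rw [eq_div_iff n3]; linear_combination -r3
      have hd2 : ((m + j + 1).choose (j + 1) : ℝ)
          = ((m + j + 2).choose (j + 1) : ℝ) * ((m : ℝ) + 1) / ((m : ℝ) + (j : ℝ) + 2) := by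
        rw [eq_div_iff n4]; linear_combination r4
      have he : ((m + 1).choose j : ℝ)
          = ((m + 1).choose (j + 1) : ℝ) * ((j : ℝ) + 1) / ((m : ℝ) + 1 - (j : ℝ)) := by
        rw [eq_div_iff n1]; linear_combination -r5
      have hf : ((m + j + 1).choose j : ℝ)
          = ((m + j + 2).choose (j + 1) : ℝ) * ((j : ℝ) + 1) / ((m : ℝ) + (j : ℝ) + 2) := by
        rw [eq_div_iff n4]; linear_combination r6
      rw [hc1, hc2, hd1, hd2, he, hf]
      push_cast
      field_simp
      ring
    · by_cases hj2 : j = m + 1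
      · -- boundary case k = m + 2 : central binomial identity
        subst hj2
        have h0 : (m + 1).choose (m + 1 + 1) = 0 := Nat.choose_succ_self (m + 1)
        have h0' : m.choose (m + 1 + 1) = 0 := Nat.choose_eq_zero_of_lt (by omega)
        have h1 : (m + 2).choose (m + 1 + 1) = 1 := by
          rw [show m + 1 + 1 = m + 2 from rfl]; exact Nat.choose_self (m + 2)
        have hcb1 : (m + (m + 1) + 3).choose (m + 1 + 1) = Nat.centralBinom (m + 2) := by
          rw [Nat.centralBinom]; congr 1; omega
        have hcb2 : (m + (m + 1) + 1).choose (m + 1) = Nat.centralBinom (m + 1) := by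
          rw [Nat.centralBinom]; congr 1; omega
        have key := Nat.succ_mul_centralBinom_succ (m + 1)
        have keyR : ((m : ℝ) + 2) * (Nat.centralBinom (m + 2) : ℝ)
            = 2 * (2 * (m : ℝ) + 3) * (Nat.centralBinom (m + 1) : ℝ) := by
          have := congrArg (Nat.cast : ℕ → ℝ) key
          push_cast at this
          linear_combination this
        rw [h0, h0', h1, hcb1, hcb2, Nat.choose_self (m + 1)]
        push_cast
        linear_combination ((m : ℝ) + 2) * keyR
      · -- k ≥ m + 3 : everything vanishes
        have h1 : (m + 2).choose (j + 1) = 0 := Nat.choose_eq_zero_of_lt (by omega)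
        have h2 : (m + 1).choose (j + 1) = 0 := Nat.choose_eq_zero_of_lt (by omega)
        have h3 : m.choose (j + 1) = 0 := Nat.choose_eq_zero_of_lt (by omega)
        have h4 : (m + 1).choose j = 0 := Nat.choose_eq_zero_of_lt (by omega)
        rw [h1, h2, h3, h4]
        push_cast
        ring

open Finset in
/-- The `α = 0` specialization of recursion (4) is satisfied by Apéry's
`ζ(2)` sequence `u_n = Σ_{k=0}^n C(n,k)² C(n+k,k)`. -/
theorem stmt17 (u : ℕ → ℝ)
    (hu : ∀ n : ℕ, u n = ∑ k ∈ range (n + 1), ((n.choose k : ℝ)) ^ 2 * ((n + k).choose k : ℝ)) :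
    ∀ n : ℕ, 1 ≤ n →
      ((n : ℝ) + 1) ^ 2 * ((n : ℝ) + 1) ^ 2 * (5 * (n : ℝ) ^ 2) * u (n + 1) -
        (55 * (n : ℝ) ^ 6 + 165 * (n : ℝ) ^ 5 + 180 * (n : ℝ) ^ 4 +
          85 * (n : ℝ) ^ 3 + 15 * (n : ℝ) ^ 2) * u n -
        (n : ℝ) ^ 2 * (n : ℝ) ^ 2 * (5 * ((n : ℝ) + 1) ^ 2) * u (n - 1) = 0 := by
  intro n hn
  obtain ⟨m, rfl⟩ : ∃ m, n = m + 1 := ⟨n - 1, (Nat.succ_pred_eq_of_pos hn).symm⟩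
  have e1 : u (m + 1 + 1) = ∑ k ∈ range (m + 3), apS (m + 2) k := by
    rw [hu]; rfl
  have e2 : u (m + 1) = ∑ k ∈ range (m + 3), apS (m + 1) k := by
    rw [hu, Finset.sum_range_succ (f := apS (m + 1)) (m + 2)]
    have : apS (m + 1) (m + 2) = 0 := by
      simp [apS, Nat.choose_succ_self (m + 1)]
    rw [this, add_zero]; rfl
  have e3 : u (m + 1 - 1) = ∑ k ∈ range (m + 3), apS m k := by
    rw [show m + 1 - 1 = m from rfl, hu,
      Finset.sum_range_succ (f := apS m) (m + 2),
      Finset.sum_range_succ (f := apS m) (m + 1)]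
    have z1 : apS m (m + 1) = 0 := by simp [apS, Nat.choose_succ_self m]
    have z2 : apS m (m + 2) = 0 := by
      simp [apS, Nat.choose_eq_zero_of_lt (show m < m + 2 from by omega)]
    rw [z1, z2, add_zero, add_zero]; rfl
  have key : ((m : ℝ) + 2) ^ 2 * u (m + 1 + 1)
      - (11 * ((m : ℝ) + 1) ^ 2 + 11 * ((m : ℝ) + 1) + 3) * u (m + 1)
      - ((m : ℝ) + 1) ^ 2 * u (m + 1 - 1) = 0 := by
    rw [e1, e2, e3, Finset.mul_sum, Finset.mul_sum, Finset.mul_sum,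
      ← Finset.sum_sub_distrib, ← Finset.sum_sub_distrib]
    rw [Finset.sum_congr rfl (fun k _ => apPoint m k)]
    rw [Finset.sum_range_sub (f := apG (m + 1)) (m + 3)]
    have g1 : apG (m + 1) (m + 3) = 0 := by
      show apG (m + 1) ((m + 2) + 1) = 0
      simp [apG, Nat.choose_succ_self (m + 1)]
    have g2 : apG (m + 1) 0 = 0 := rfl
    rw [g1, g2, sub_zero]
  push_cast
  push_cast at key
  linear_combination (5 * ((m : ℝ) + 1) ^ 2 * ((m : ℝ) + 2) ^ 2) * key
end

section
/- The α = 0 specialization of the recursion (n+1)³(n+1)³(2n)(3n²)u_{n+1} - (2n+1)(102n⁸+408n⁷+642n⁶+498n⁵+192n⁴+30n³)u_n + n³·n³·(2n+2)(3(n+1)²)u_{n-1} = 0 simplifies, after dividing by 6n²(n+1)², to Apéry's recursion (n+1)³ u_{n+1} = (2n+1)(17n²+17n+5) u_n - n³ u_{n-1}, which is satisfied by u_n = Σ_{k=0}^n C(n,k)² C(n+k,k)². -/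
/-!
Creative telescoping (the WZ method). With `c(n, k) = C(n, k) C(n + k, k)`, the Apéry operator
applied to `c(·, k)²` equals `B(n, k) - B(n, k - 1)` for the certificate
`B(n, k) = 4 (2n + 1) (k (2k + 1) - (2n + 1)²) c(n, k)²`, so its sum over `k` telescopes to the
boundary term `B(n, n + 1) = 0`. The certificate identity becomes a polynomial identity once every
value of `c` is expressed through `c(n, k)` by the ratios `c(n, k + 1) / c(n, k)` and
`c(n + 1, k) / c(n, k)`, which are rational in `n` and `k`.
-/

open Finset

theorem Nat.cast_choose_succ_right_eq {R : Type*} [CommRing R] (n k : ℕ) :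
    (n.choose (k + 1) : R) * (k + 1) = n.choose k * (n - k) := by
  rcases le_or_gt k n with h | h
  · have := congrArg (Nat.cast (R := R)) (Nat.choose_succ_right_eq n k)
    push_cast [Nat.cast_sub h] at this
    exact this
  · simp [Nat.choose_eq_zero_of_lt h, Nat.choose_eq_zero_of_lt (h.trans k.lt_succ_self)]

theorem Nat.cast_choose_mul_succ_eq {R : Type*} [CommRing R] (n k : ℕ) :
    (n.choose k : R) * (n + 1) = (n + 1).choose k * (n + 1 - k) := by
  rcases le_or_gt k (n + 1) with h | h
  · have := congrArg (Nat.cast (R := R)) (Nat.choose_mul_succ_eq n k)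
    push_cast [Nat.cast_sub h] at this
    exact this
  · simp [Nat.choose_eq_zero_of_lt h, Nat.choose_eq_zero_of_lt (n.lt_succ_self.trans h)]

section Apery

variable (R : Type*) [CommRing R]

def aperyBinom (n k : ℕ) : R := n.choose k * (n + k).choose k

def aperyNumber (n : ℕ) : R := ∑ k ∈ range (n + 1), aperyBinom R n k ^ 2

def aperyCertificate (n k : ℕ) : R :=
  4 * (2 * n + 1) * (k * (2 * k + 1) - (2 * n + 1) ^ 2) * aperyBinom R n k ^ 2

variable {R}

theorem aperyBinom_zero_right (n : ℕ) : aperyBinom R n 0 = 1 := by simp [aperyBinom]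

theorem aperyBinom_of_lt {n k : ℕ} (h : n < k) : aperyBinom R n k = 0 := by
  simp [aperyBinom, Nat.choose_eq_zero_of_lt h]

theorem aperyBinom_succ_right (n k : ℕ) :
    aperyBinom R n (k + 1) * (k + 1) ^ 2 = aperyBinom R n k * (n - k) * (n + k + 1) := by
  have h₁ := Nat.cast_choose_succ_right_eq (R := R) n k
  have h₂ := congrArg (Nat.cast (R := R)) (Nat.add_one_mul_choose_eq (n + k) k)
  push_cast at h₂
  simp only [aperyBinom, ← add_assoc]
  linear_combination
    ((n + k + 1).choose (k + 1) * (k + 1) : R) * h₁ - (n.choose k * (n - k) : R) * h₂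

theorem aperyBinom_succ_left (n k : ℕ) :
    aperyBinom R (n + 1) k * (n + 1 - k) = aperyBinom R n k * (n + k + 1) := by
  have h₁ := Nat.cast_choose_mul_succ_eq (R := R) n k
  have h₂ := Nat.cast_choose_mul_succ_eq (R := R) (n + k) k
  push_cast at h₂
  rw [aperyBinom, aperyBinom, Nat.add_right_comm n 1 k]
  linear_combination (-(n + k + 1).choose k : R) * h₁ - (n.choose k : R) * h₂

theorem aperyNumber_eq_sum_range {n N : ℕ} (h : n < N) :
    aperyNumber R n = ∑ k ∈ range N, aperyBinom R n k ^ 2 := by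
  refine sum_subset (range_subset_range.2 h) fun k _ hk => ?_
  rw [aperyBinom_of_lt (by simpa using hk), zero_pow two_ne_zero]

variable [IsDomain R] [CharZero R]

theorem aperyBinom_wz (n k : ℕ) :
    ((n : R) + 2) ^ 3 * aperyBinom R (n + 2) (k + 1) ^ 2
      - (2 * n + 3) * (17 * ((n : R) + 1) ^ 2 + 17 * (n + 1) + 5)
        * aperyBinom R (n + 1) (k + 1) ^ 2
      + ((n : R) + 1) ^ 3 * aperyBinom R n (k + 1) ^ 2
      = aperyCertificate R (n + 1) (k + 1) - aperyCertificate R (n + 1) k := by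
  set y := aperyBinom R (n + 1) k
  have hA : aperyBinom R (n + 2) (k + 1) * (k + 1) ^ 2 = y * (n + k + 2) * (n + k + 3) := by
    have h₁ := aperyBinom_succ_right (R := R) (n + 2) k
    have h₂ := aperyBinom_succ_left (R := R) (n + 1) k
    push_cast at h₁ h₂
    linear_combination h₁ + ((n : R) + k + 3) * h₂
  have hB : aperyBinom R (n + 1) (k + 1) * (k + 1) ^ 2 = y * (n + 1 - k) * (n + k + 2) := by
    have h := aperyBinom_succ_right (R := R) (n + 1) k
    push_cast at h
    linear_combination h
  have hC : aperyBinom R n (k + 1) * (k + 1) ^ 2 = y * (n + 1 - k) * (n - k) := by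
    linear_combination
      aperyBinom_succ_right (R := R) n k - ((n : R) - k) * aperyBinom_succ_left (R := R) n k
  -- after scaling by `(k + 1) ^ 4`, `hA`, `hB`, `hC` make every term `y ^ 2` times a polynomial
  apply mul_right_cancel₀ (pow_ne_zero 4 (Nat.cast_add_one_ne_zero (R := R) k))
  simp only [aperyCertificate]
  push_cast
  linear_combination
    ((n : R) + 2) ^ 3
      * (aperyBinom R (n + 2) (k + 1) * (k + 1) ^ 2 + y * (n + k + 2) * (n + k + 3)) * hA
    - ((2 * n + 3) * (17 * ((n : R) + 1) ^ 2 + 17 * (n + 1) + 5)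
      + 4 * (2 * ((n : R) + 1) + 1) * ((k + 1) * (2 * (k + 1) + 1) - (2 * ((n : R) + 1) + 1) ^ 2))
      * (aperyBinom R (n + 1) (k + 1) * (k + 1) ^ 2 + y * (n + 1 - k) * (n + k + 2)) * hB
    + ((n : R) + 1) ^ 3 * (aperyBinom R n (k + 1) * (k + 1) ^ 2 + y * (n + 1 - k) * (n - k)) * hC

theorem sum_range_aperyOperator (n N : ℕ) :
    ∑ k ∈ range (N + 1), (((n : R) + 2) ^ 3 * aperyBinom R (n + 2) k ^ 2
      - (2 * n + 3) * (17 * ((n : R) + 1) ^ 2 + 17 * (n + 1) + 5) * aperyBinom R (n + 1) k ^ 2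
      + ((n : R) + 1) ^ 3 * aperyBinom R n k ^ 2) = aperyCertificate R (n + 1) N := by
  induction N with
  | zero =>
    simp only [zero_add, sum_range_one, aperyBinom_zero_right, aperyCertificate]
    push_cast
    ring
  | succ N ih => rw [sum_range_succ, ih, aperyBinom_wz]; ring

theorem aperyNumber_add_two (n : ℕ) :
    ((n : R) + 2) ^ 3 * aperyNumber R (n + 2)
      = (2 * n + 3) * (17 * ((n : R) + 1) ^ 2 + 17 * (n + 1) + 5) * aperyNumber R (n + 1)
        - ((n : R) + 1) ^ 3 * aperyNumber R n := by
  have h := sum_range_aperyOperator (R := R) n (n + 2)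
  rw [aperyCertificate, aperyBinom_of_lt (by omega), sum_add_distrib, sum_sub_distrib,
    ← mul_sum, ← mul_sum, ← mul_sum] at h
  rw [aperyNumber_eq_sum_range (N := n + 3) (by omega),
    aperyNumber_eq_sum_range (N := n + 3) (by omega),
    aperyNumber_eq_sum_range (N := n + 3) (by omega)]
  linear_combination h

end Apery

open Finset in
/-- The `α = 0` specialization of recursion (8), which after dividing by a common
factor is Apéry's recursion `(n+1)³ u_{n+1} = (2n+1)(17n²+17n+5) u_n - n³ u_{n-1}`,
is satisfied by `u_n = Σ_{k=0}^n C(n,k)² C(n+k,k)²`. -/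
theorem stmt18 (u : ℕ → ℝ)
    (hu : ∀ n : ℕ, u n = ∑ k ∈ range (n + 1),
      ((n.choose k : ℝ)) ^ 2 * (((n + k).choose k : ℝ)) ^ 2) :
    ∀ n : ℕ, 1 ≤ n →
      (((n : ℝ) + 1) ^ 3 * ((n : ℝ) + 1) ^ 3 * (2 * (n : ℝ)) * (3 * (n : ℝ) ^ 2) * u (n + 1) -
        (2 * (n : ℝ) + 1) * (102 * (n : ℝ) ^ 8 + 408 * (n : ℝ) ^ 7 + 642 * (n : ℝ) ^ 6 +
          498 * (n : ℝ) ^ 5 + 192 * (n : ℝ) ^ 4 + 30 * (n : ℝ) ^ 3) * u n +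
        (n : ℝ) ^ 3 * (n : ℝ) ^ 3 * (2 * (n : ℝ) + 2) * (3 * ((n : ℝ) + 1) ^ 2) * u (n - 1) = 0)
      ∧
      (((n : ℝ) + 1) ^ 3 * u (n + 1) =
        (2 * (n : ℝ) + 1) * (17 * (n : ℝ) ^ 2 + 17 * (n : ℝ) + 5) * u n -
          (n : ℝ) ^ 3 * u (n - 1)) := by
  have hu_eq : u = aperyNumber ℝ := funext fun n => by simp [hu, aperyNumber, aperyBinom, mul_pow]
  intro n hn
  obtain ⟨m, rfl⟩ := Nat.exists_eq_add_of_le' hn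
  have h := aperyNumber_add_two (R := ℝ) m
  subst hu_eq
  simp only [Nat.add_sub_cancel]
  push_cast
  constructor
  · linear_combination 6 * ((m : ℝ) + 1) ^ 3 * ((m : ℝ) + 2) ^ 3 * h
  · linear_combination h
end
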